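/- arXiv:2501.09599 — 4 statements merged into one kernel-verified Lean document; each statement's English description precedes it below -/
import Mathlib

section
/- Let μ be a compactly supported finite Borel measure on ℝ^d. Suppose there exist C₁, C₂, α > 0 such that: (1) for every x in the support of μ and every r > 0, μ(B(x,2r)) ≤ C₁ μ(B(x,r)); and (2) for every x in the support of μ, every affine subspace W ⊊ ℝ^d, every r with 0 < r ≤ 1 and every ε > 0, μ(W^{(εr)} ∩ B(x,r)) ≤ C₂ ε^α μ(B(x,r)). Then μ(W(Ψ)) = 0 for every decreasing function Ψ : ℕ → (0,∞) satisfying ∑_{n=1}^∞ n^{α(d+1)/d − 1} Ψ(n)^α < ∞. -/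
noncomputable section
open MeasureTheory Metric Filter Topology

variable {E : Type*} [NormedAddCommGroup E] [NormedSpace ℝ E]

/-- `f` is a contraction with ratio `r ∈ (0,1)`. -/
def IsContractionWith (r : ℝ) (f : E → E) : Prop :=
  0 < r ∧ r < 1 ∧ ∀ x y, ‖f x - f y‖ ≤ r * ‖x - y‖

/-- `f` is a contracting similarity with ratio `r ∈ (0,1)`. -/
def IsSimilarityWith (r : ℝ) (f : E → E) : Prop :=
  0 < r ∧ r < 1 ∧ ∀ x y, ‖f x - f y‖ = r * ‖x - y‖

/-- A self-conformal IFS. -/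
def IsSelfConformalIFS {A : Type*} [Fintype A] (φ : A → E → E) : Prop :=
  2 ≤ Fintype.card A ∧
  (∀ a, ∃ r, IsContractionWith r (φ a)) ∧
  (∀ a, ContDiff ℝ 1 (φ a)) ∧
  (∀ a x, 0 < ‖fderiv ℝ (φ a) x‖ ∧ ∀ v, ‖fderiv ℝ (φ a) x v‖ = ‖fderiv ℝ (φ a) x‖ * ‖v‖) ∧
  (∃ H α₀ : ℝ, 0 < H ∧ 0 < α₀ ∧ ∀ a x y,
    |‖fderiv ℝ (φ a) x‖ - ‖fderiv ℝ (φ a) y‖| ≤ H * ‖x - y‖ ^ α₀) ∧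
  (∃ a₁ a₂ x₁ x₂, φ a₁ x₁ = x₁ ∧ φ a₂ x₂ = x₂ ∧ x₁ ≠ x₂)

/-- A self-similar IFS. -/
def IsSelfSimilarIFS {A : Type*} [Fintype A] (φ : A → E → E) : Prop :=
  2 ≤ Fintype.card A ∧
  (∀ a, ∃ r, IsSimilarityWith r (φ a)) ∧
  (∃ a₁ a₂ x₁ x₂, φ a₁ x₁ = x₁ ∧ φ a₂ x₂ = x₂ ∧ x₁ ≠ x₂)

/-- The IFS is affinely irreducible: no (nonempty) proper affine subspace is preserved. -/
def AffinelyIrreducible {A : Type*} (φ : A → E → E) : Prop :=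
  ¬ ∃ W : AffineSubspace ℝ E, (W : Set E).Nonempty ∧ W ≠ ⊤ ∧
      ∀ a, φ a '' (W : Set E) ⊆ (W : Set E)

/-- Closed `ε`-neighbourhood of an affine subspace. -/
def affNbhd (W : AffineSubspace ℝ E) (ε : ℝ) : Set E :=
  {y | Metric.infDist y (W : Set E) ≤ ε}

/-- topological support of a measure -/
def msupport [MeasurableSpace E] (μ : Measure E) : Set E :=
  {x | ∀ r : ℝ, 0 < r → 0 < μ (Metric.ball x r)}

/-- distance between two sets -/
def setDist (S T : Set E) : ℝ := sInf (Set.image2 dist S T)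

/-- map corresponding to a finite word (as a list) -/
def listMap {A : Type*} (φ : A → E → E) : List A → E → E
  | [] => id
  | a :: l => φ a ∘ listMap φ l

/-- map corresponding to the first `n` letters of an infinite word -/
def wordMap {A : Type*} (φ : A → E → E) : ℕ → (ℕ → A) → E → E
  | 0, _ => id
  | n + 1, a => φ (a 0) ∘ wordMap φ n (fun k => a (k + 1))

/-- set of `Ψ`-well-approximable vectors in `ℝ^d` -/
def WApprox (d : ℕ) (Ψ : ℕ → ℝ) : Set (EuclideanSpace ℝ (Fin d)) :=
  {x | {pq : (Fin d → ℤ) × ℕ | 0 < pq.2 ∧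
        ∀ i, |x i - (pq.1 i : ℝ) / (pq.2 : ℝ)| ≤ Ψ pq.2}.Infinite}

/-- set of singular vectors in `ℝ^d` -/
def Sing (d : ℕ) : Set (EuclideanSpace ℝ (Fin d)) :=
  {x | ∀ c : ℝ, 0 < c → ∃ T : ℝ, 0 < T ∧ ∀ t : ℝ, T ≤ t →
    ∃ q : ℕ, 0 < q ∧ (q : ℝ) < t ∧
      ∀ i, |(q : ℝ) * x i - round ((q : ℝ) * x i)| ≤ c * t ^ (-(1 : ℝ) / (d : ℝ))}
namespace PV

theorem coord_abs_le_norm {d : ℕ} (x : EuclideanSpace ℝ (Fin d)) (j : Fin d) : |x j| ≤ ‖x‖ := by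
  rw [EuclideanSpace.norm_eq, ← Real.sqrt_sq_eq_abs]
  apply Real.sqrt_le_sqrt
  have := Finset.single_le_sum (f := fun i => ‖x i‖^2) (fun i _ => by positivity) (Finset.mem_univ j)
  simpa [sq_abs, Real.norm_eq_abs] using this

theorem norm_le_sum_abs {d : ℕ} (x : EuclideanSpace ℝ (Fin d)) : ‖x‖ ≤ ∑ i, |x i| := by
  rw [EuclideanSpace.norm_eq]
  have h1 : ∑ i, ‖x i‖ ^ 2 ≤ (∑ i, ‖x i‖) ^ 2 :=
    Finset.sum_sq_le_sq_sum_of_nonneg (fun i _ => norm_nonneg _)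
  have h2 : Real.sqrt (∑ i, ‖x i‖ ^ 2) ≤ Real.sqrt ((∑ i, ‖x i‖)^2) := Real.sqrt_le_sqrt h1
  rw [Real.sqrt_sq (by positivity)] at h2
  simpa [Real.norm_eq_abs] using h2

theorem blocks_sum (a : ℕ → ℝ) (K : ℕ) :
    ∑ k ∈ Finset.range K, ∑ n ∈ Finset.Ioc (2^k) (2^(k+1)), a n
      = ∑ n ∈ Finset.Ioc (2^0) (2^K), a n := by
  induction K with
  | zero => simp
  | succ K ih =>
      rw [Finset.sum_range_succ, ih,
        Finset.sum_Ioc_consecutive a (Nat.pow_le_pow_right (by norm_num) (Nat.zero_le K))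
          (Nat.pow_le_pow_right (by norm_num) (by omega))]

theorem condensation {Ψ : ℕ → ℝ} (hΨpos : ∀ n, 0 < Ψ n) (hΨdec : Antitone Ψ)
    {α κ : ℝ} (hα : 0 < α) (hκ : 0 < κ)
    (hsum : Summable fun n : ℕ => (n : ℝ) ^ (κ - 1) * Ψ n ^ α) :
    Summable fun k : ℕ => ((2^k : ℕ) : ℝ) ^ κ * Ψ (2^k) ^ α := by
  set a : ℕ → ℝ := fun n => (n : ℝ) ^ (κ - 1) * Ψ n ^ α with ha
  have hanneg : ∀ n, 0 ≤ a n := fun n => mul_nonneg (Real.rpow_nonneg (Nat.cast_nonneg n) _)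
    (Real.rpow_nonneg (hΨpos n).le _)
  set b : ℕ → ℝ := fun k => ((2^k : ℕ) : ℝ) ^ κ * Ψ (2^k) ^ α with hb
  have hbnneg : ∀ k, 0 ≤ b k := fun k => mul_nonneg (Real.rpow_nonneg (by positivity) _)
    (Real.rpow_nonneg (hΨpos _).le _)
  have key : ∀ k : ℕ, b (k+1) ≤ 2 * (2:ℝ)^κ * ∑ n ∈ Finset.Ioc (2^k) (2^(k+1)), a n := by
    intro k
    have hcard : (Finset.Ioc (2^k) (2^(k+1))).card = 2^k := by
      rw [Nat.card_Ioc, pow_succ]; omega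
    have hterm : ∀ n ∈ Finset.Ioc (2^k) (2^(k+1)),
        ((2^k : ℕ) : ℝ) ^ κ / (2^(k+1) : ℕ) * Ψ (2^(k+1)) ^ α ≤ a n := by
      intro n hn
      rw [Finset.mem_Ioc] at hn
      have hn0 : (0:ℝ) < (n:ℝ) := by
        have : 0 < n := lt_of_le_of_lt (Nat.zero_le _) hn.1
        exact_mod_cast this
      have h1 : Ψ (2^(k+1)) ^ α ≤ Ψ n ^ α :=
        Real.rpow_le_rpow (hΨpos _).le (hΨdec hn.2) hα.le
      have h2 : ((2^k : ℕ) : ℝ) ^ κ / ((2^(k+1) : ℕ) : ℝ) ≤ (n:ℝ) ^ (κ - 1) := by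
        rw [Real.rpow_sub hn0, Real.rpow_one]
        apply div_le_div₀
        · exact Real.rpow_nonneg hn0.le _
        · exact Real.rpow_le_rpow (by positivity) (by exact_mod_cast hn.1.le) hκ.le
        · exact hn0
        · exact_mod_cast hn.2
      calc ((2^k : ℕ) : ℝ) ^ κ / (2^(k+1) : ℕ) * Ψ (2^(k+1)) ^ α
          ≤ (n:ℝ) ^ (κ-1) * Ψ (2^(k+1)) ^ α := by
            apply mul_le_mul_of_nonneg_right h2 (Real.rpow_nonneg (hΨpos _).le _)
        _ ≤ a n := mul_le_mul_of_nonneg_left h1 (Real.rpow_nonneg hn0.le _)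
    have hsumlb : ((2^k : ℕ):ℝ) * (((2^k : ℕ) : ℝ) ^ κ / (2^(k+1) : ℕ) * Ψ (2^(k+1)) ^ α)
        ≤ ∑ n ∈ Finset.Ioc (2^k) (2^(k+1)), a n := by
      have := Finset.card_nsmul_le_sum _ _ _ hterm
      rw [hcard] at this
      simpa [nsmul_eq_mul] using this
    have hLHS : ((2^k : ℕ):ℝ) * (((2^k : ℕ) : ℝ) ^ κ / (2^(k+1) : ℕ) * Ψ (2^(k+1)) ^ α)
        = b (k+1) / (2 * (2:ℝ)^κ) := by
      have e1 : ((2^(k+1) : ℕ) : ℝ) ^ κ = (2:ℝ)^κ * ((2^k : ℕ) : ℝ) ^ κ := by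
        push_cast
        rw [pow_succ, mul_comm ((2:ℝ)^k) 2, Real.mul_rpow (by norm_num) (by positivity)]
      rw [hb]
      simp only []
      rw [e1]
      have h2k1 : ((2^(k+1) : ℕ) : ℝ) = 2 * ((2^k : ℕ):ℝ) := by push_cast; ring
      rw [h2k1]
      have hpos1 : (0:ℝ) < ((2^k : ℕ):ℝ) := by positivity
      have hpos2 : (0:ℝ) < (2:ℝ)^κ := Real.rpow_pos_of_pos (by norm_num) _
      field_simp
    rw [hLHS] at hsumlb
    rw [div_le_iff₀ (by positivity)] at hsumlb
    linarith [hsumlb]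
  have hC : ∀ K : ℕ, ∑ k ∈ Finset.range K, b (k+1) ≤ 2 * (2:ℝ)^κ * (∑' n, a n) := by
    intro K
    calc ∑ k ∈ Finset.range K, b (k+1)
        ≤ ∑ k ∈ Finset.range K, 2 * (2:ℝ)^κ * ∑ n ∈ Finset.Ioc (2^k) (2^(k+1)), a n :=
          Finset.sum_le_sum (fun k _ => key k)
      _ = 2 * (2:ℝ)^κ * ∑ k ∈ Finset.range K, ∑ n ∈ Finset.Ioc (2^k) (2^(k+1)), a n := by
          rw [Finset.mul_sum]
      _ = 2 * (2:ℝ)^κ * ∑ n ∈ Finset.Ioc (2^0) (2^K), a n := by rw [blocks_sum]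
      _ ≤ 2 * (2:ℝ)^κ * (∑' n, a n) := by
          apply mul_le_mul_of_nonneg_left _ (by positivity)
          exact Summable.sum_le_tsum _ (fun n _ => hanneg n) hsum
  have hshift : Summable fun k => b (k+1) :=
    summable_of_sum_range_le (fun k => hbnneg _) hC
  exact (summable_nat_add_iff 1).mp hshift

theorem sep_cover {X : Type*} [MetricSpace X] {S : Set X} (hS : IsCompact S)
    {ρ : ℝ} (hρ : 0 < ρ) :
    ∃ F : Finset X, ↑F ⊆ S ∧ (∀ x ∈ F, ∀ y ∈ F, x ≠ y → ρ ≤ dist x y) ∧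
      S ⊆ ⋃ x ∈ F, Metric.closedBall x ρ := by
  classical
  obtain ⟨t, htS, htcov⟩ := hS.elim_nhds_subcover (fun x => Metric.ball x (ρ/3))
    (fun x _ => Metric.ball_mem_nhds x (by positivity))
  have hbound : ∀ F : Finset X, ↑F ⊆ S →
      (∀ x ∈ F, ∀ y ∈ F, x ≠ y → ρ ≤ dist x y) → F.card ≤ t.card := by
    intro F hFS hFsep
    have hchoice : ∀ a ∈ F, ∃ c ∈ t, a ∈ Metric.ball c (ρ/3) := by
      intro a ha
      have := htcov (hFS ha)
      simpa using this
    choose f hf1 hf2 using hchoice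
    apply Finset.card_le_card_of_injOn (fun a => if h : a ∈ F then f a h else a)
    · intro a ha; simp only [Finset.mem_coe] at ha ⊢; simp only [ha, dif_pos]; exact hf1 a ha
    · intro a ha b hb hab
      simp only [Finset.mem_coe] at ha hb
      simp only [ha, hb, dif_pos] at hab
      by_contra hne
      have h1 := hf2 a ha
      have h2 := hf2 b hb
      rw [hab] at h1
      have : dist a b < ρ := by
        rw [Metric.mem_ball] at h1 h2
        rw [dist_comm] at h2
        calc dist a b ≤ dist a (f b hb) + dist (f b hb) b := dist_triangle _ _ _
          _ < ρ/3 + ρ/3 := by rw [dist_comm a (f b hb)] at h1 ⊢; exact add_lt_add h1 h2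
          _ ≤ ρ := by linarith
      exact absurd (hFsep a ha b hb hne) (not_le.mpr this)
  set Cards : Set ℕ := {n | ∃ F : Finset X, ↑F ⊆ S ∧
      (∀ x ∈ F, ∀ y ∈ F, x ≠ y → ρ ≤ dist x y) ∧ F.card = n} with hCards
  have h0 : 0 ∈ Cards := ⟨∅, by simp⟩
  have hbdd : BddAbove Cards := by
    refine ⟨t.card, fun n hn => ?_⟩
    obtain ⟨F, h1, h2, h3⟩ := hn
    exact h3 ▸ hbound F h1 h2
  have hmem := Nat.sSup_mem ⟨0, h0⟩ hbdd
  obtain ⟨F, hFS, hFsep, hFcard⟩ := hmem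
  refine ⟨F, hFS, hFsep, ?_⟩
  intro y hy
  by_contra hyn
  simp only [Set.mem_iUnion, Metric.mem_closedBall, not_exists] at hyn
  have hfar : ∀ x ∈ F, ρ < dist y x := by
    intro x hx
    have := hyn x
    push_neg at this
    exact this hx
  have hyF : y ∉ F := by
    intro hyF
    exact absurd (hfar y hyF) (by simpa using hρ.le)
  have hnew : F.card + 1 ∈ Cards := by
    refine ⟨insert y F, ?_, ?_, ?_⟩
    · intro z hz
      simp only [Finset.coe_insert, Set.mem_insert_iff] at hz
      rcases hz with rfl | hz
      · exact hy
      · exact hFS hz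
    · intro a ha b hb hab
      rw [Finset.mem_insert] at ha hb
      rcases ha with rfl | ha
      · rcases hb with rfl | hb
        · exact absurd rfl hab
        · exact (hfar b hb).le
      · rcases hb with rfl | hb
        · rw [dist_comm]; exact (hfar a ha).le
        · exact hFsep a ha b hb hab
    · rw [Finset.card_insert_of_notMem hyF, hFcard]
  have := le_csSup hbdd hnew
  rw [hFcard] at this
  omega

open Metric in
theorem rat_span_ne_top {d : ℕ} (hd : 0 < d) (Q : ℕ) (hQ : 0 < Q) {ρ : ℝ} (hρ : 0 < ρ)
    (c : EuclideanSpace ℝ (Fin d))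
    (hsmall : ((2*Q : ℕ) : ℝ)^(d+1) * (Nat.factorial d) * (2*ρ)^d < 1) :
    affineSpan ℝ {y : EuclideanSpace ℝ (Fin d) |
        (∃ p : Fin d → ℤ, ∃ q : ℕ, Q ≤ q ∧ q < 2*Q ∧ ∀ i, y i = (p i : ℝ)/(q:ℝ))
        ∧ y ∈ closedBall c ρ} ≠ ⊤ := by
  classical
  haveI : Nonempty (Fin d) := ⟨⟨0, hd⟩⟩
  set R : Set (EuclideanSpace ℝ (Fin d)) := {y |
      (∃ p : Fin d → ℤ, ∃ q : ℕ, Q ≤ q ∧ q < 2*Q ∧ ∀ i, y i = (p i : ℝ)/(q:ℝ))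
      ∧ y ∈ closedBall c ρ} with hR
  intro htop
  rcases R.eq_empty_or_nonempty with hRe | ⟨y₀, hy₀⟩
  · rw [hRe] at htop
    simp only [AffineSubspace.span_empty] at htop
    exact AffineSubspace.bot_ne_top ℝ _ _ htop
  obtain ⟨⟨p₀, q₀, hq₀1, hq₀2, hrat₀⟩, hball₀⟩ := hy₀
  have hy₀R : y₀ ∈ R := ⟨⟨p₀, q₀, hq₀1, hq₀2, hrat₀⟩, hball₀⟩
  have hdir : vectorSpan ℝ R = ⊤ := by
    rw [← direction_affineSpan, htop, AffineSubspace.direction_top]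
  have hspan : Submodule.span ℝ ((· -ᵥ y₀) '' R) = ⊤ := by
    rw [← vectorSpan_eq_span_vsub_set_right ℝ hy₀R, hdir]
  obtain ⟨bs, hbs_sub, hbs_span, hbs_li⟩ := exists_linearIndependent ℝ ((· -ᵥ y₀) '' R)
  rw [hspan] at hbs_span
  have hbs_fin : bs.Finite := hbs_li.setFinite
  haveI := hbs_fin.fintype
  have hB : Module.finrank ℝ (EuclideanSpace ℝ (Fin d)) = Fintype.card bs := by
    apply Module.finrank_eq_card_basis (Module.Basis.mk hbs_li ?_)
    rw [Subtype.range_coe]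
    exact hbs_span.ge
  rw [finrank_euclideanSpace_fin] at hB
  have e : Fin d ≃ bs := (Fintype.equivFinOfCardEq hB.symm).symm
  set v : Fin d → EuclideanSpace ℝ (Fin d) := fun i => (e i : EuclideanSpace ℝ (Fin d)) with hv
  have hvli : LinearIndependent ℝ v := hbs_li.comp e e.injective
  have hvmem : ∀ i, ∃ y, y ∈ R ∧ y -ᵥ y₀ = v i := by
    intro i
    have : (v i : EuclideanSpace ℝ (Fin d)) ∈ bs := (e i).2
    obtain ⟨y, hyR, hy⟩ := hbs_sub this
    exact ⟨y, hyR, hy⟩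
  choose ys hysR hysv using hvmem
  choose ps qs hqs1 hqs2 hrats using fun i => (hysR i).1
  have hysball : ∀ i, ys i ∈ closedBall c ρ := fun i => (hysR i).2
  -- determinant of difference matrix is nonzero
  set D : Matrix (Fin d) (Fin d) ℝ := Matrix.of (fun i j => v i j) with hD
  have hdetD : D.det ≠ 0 := by
    set L := (WithLp.linearEquiv 2 ℝ (Fin d → ℝ))
    have hli' : LinearIndependent ℝ (fun i => L (v i)) := by
      have := hvli.map' L.toLinearMap L.ker
      exact this
    have hcard : Fintype.card (Fin d) = Module.finrank ℝ (Fin d → ℝ) := by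
      simp [Module.finrank_pi]
    set B' := basisOfLinearIndependentOfCardEqFinrank hli' hcard
    have hunit := (Pi.basisFun ℝ (Fin d)).isUnit_det B'
    have hBc : ⇑B' = fun i => L (v i) := coe_basisOfLinearIndependentOfCardEqFinrank _ _
    rw [Module.Basis.det_apply] at hunit
    have hmat : (Pi.basisFun ℝ (Fin d)).toMatrix ⇑B' = D.transpose := by
      ext i j
      rw [Module.Basis.toMatrix_apply, hBc]
      simp [Pi.basisFun_repr, hD, L]
    rw [hmat, Matrix.det_transpose] at hunit
    exact hunit.ne_zero
  -- assemble data over Fin (d+1)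
  set Y : Fin (d+1) → EuclideanSpace ℝ (Fin d) := Fin.cons y₀ ys with hY
  set P : Fin (d+1) → (Fin d → ℤ) := Fin.cons p₀ ps with hP
  set qq : Fin (d+1) → ℕ := Fin.cons q₀ qs with hqq
  have hqqQ : ∀ a, Q ≤ qq a ∧ qq a < 2*Q := by
    intro a
    refine Fin.cases ?_ ?_ a <;> simp [hqq]
    · exact ⟨hq₀1, hq₀2⟩
    · exact fun i => ⟨hqs1 i, hqs2 i⟩
  have hqqpos : ∀ a, 0 < qq a := fun a => lt_of_lt_of_le hQ (hqqQ a).1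
  have hYrat : ∀ a, ∀ i, Y a i = (P a i : ℝ)/(qq a : ℝ) := by
    intro a
    refine Fin.cases ?_ ?_ a <;> simp [hY, hP, hqq]
    · exact hrat₀
    · exact hrats
  have hYball : ∀ a, Y a ∈ closedBall c ρ := by
    intro a
    refine Fin.cases ?_ ?_ a <;> simp [hY]
    · exact hball₀
    · intro i; exact hysball i
  -- matrices
  set U : Matrix (Fin (d+1)) (Fin (d+1)) ℝ :=
    Matrix.of (fun a => Fin.cons 1 (fun j => Y a j)) with hU
  set Lm : Matrix (Fin (d+1)) (Fin (d+1)) ℝ :=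
    Matrix.of (fun a b => if b = 0 then (if a = 0 then (1:ℝ) else -1) else (if a = b then 1 else 0))
    with hLm
  have hdetL : Lm.det = 1 := by
    rw [Matrix.det_of_lowerTriangular Lm ?_]
    · simp [hLm]
    · intro a b hab
      have h1 : a < b := hab
      have hb0 : b ≠ 0 := by
        intro hb; rw [hb] at h1; exact absurd h1 (Fin.not_lt_zero a)
      have hab' : a ≠ b := ne_of_lt h1
      simp [hLm, hb0, hab']
  have hLU0 : ∀ b, (Lm * U) 0 b = U 0 b := by
    intro b
    rw [Matrix.mul_apply]
    rw [Finset.sum_eq_single 0]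
    · simp [hLm]
    · intro k _ hk; simp [hLm, hk, Ne.symm hk]
    · simp
  have hLUs : ∀ (a : Fin d) (b : Fin (d+1)), (Lm * U) a.succ b = U a.succ b - U 0 b := by
    intro a b
    rw [Matrix.mul_apply]
    have hsne : (a.succ : Fin (d+1)) ≠ 0 := Fin.succ_ne_zero a
    rw [Finset.sum_eq_add_of_mem 0 a.succ (Finset.mem_univ _) (Finset.mem_univ _) (Ne.symm hsne) ?_]
    · simp [hLm, hsne]
      ring
    · intro k _ hk
      simp only [hLm, Matrix.of_apply]
      rcases hk with ⟨hk0, hks⟩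
      simp [hk0, Ne.symm hks]
  -- determinant computation
  have hvcoord : ∀ (i : Fin d) (j : Fin d), v i j = ys i j - y₀ j := by
    intro i j
    rw [← hysv i]
    rfl
  have hcol : ∀ a : Fin (d+1), (Lm * U) a 0 = if a = 0 then 1 else 0 := by
    intro a
    refine Fin.cases ?_ ?_ a
    · rw [hLU0]; simp [hU]
    · intro i
      rw [hLUs]
      simp [hU, Fin.succ_ne_zero]
  have hdetLU : (Lm * U).det = D.det := by
    rw [Matrix.det_succ_column_zero]
    have hsub : (Lm * U).submatrix (Fin.succAbove 0) Fin.succ = D := by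
      ext i j
      rw [Matrix.submatrix_apply, Fin.succAbove_zero, hLUs]
      simp only [hU, Matrix.of_apply, Fin.cons_succ]
      rw [show D i j = v i j from rfl, hvcoord]
      rfl
    rw [Finset.sum_eq_single 0]
    · rw [hcol, hsub]
      norm_num
    · intro a _ ha
      rw [hcol, if_neg ha]
      ring
    · simp
  have hdetU : U.det = D.det := by
    have := Matrix.det_mul Lm U
    rw [hdetL, one_mul] at this
    rw [← this, hdetLU]
  -- integer matrix
  set Mz : Matrix (Fin (d+1)) (Fin (d+1)) ℤ :=
    Matrix.of (fun a => Fin.cons ((qq a : ℤ)) (P a)) with hMz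
  have hmap : Mz.map (Int.cast : ℤ → ℝ) = Matrix.diagonal (fun a => (qq a : ℝ)) * U := by
    ext a b
    rw [Matrix.map_apply, Matrix.diagonal_mul]
    refine Fin.cases ?_ ?_ b
    · simp [hMz, hU]
    · intro j
      simp only [hMz, hU, Matrix.of_apply, Fin.cons_succ]
      rw [hYrat a j]
      have : (qq a : ℝ) ≠ 0 := by exact_mod_cast (hqqpos a).ne'
      push_cast
      field_simp
  have hdetMr : ((Mz.det : ℤ) : ℝ) = (∏ a, (qq a : ℝ)) * D.det := by
    have h1 := RingHom.map_det (Int.castRingHom ℝ) Mz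
    simp only [RingHom.mapMatrix_apply, Int.coe_castRingHom] at h1
    rw [hmap, Matrix.det_mul, Matrix.det_diagonal, hdetU] at h1
    exact h1
  have hqprodpos : 0 < ∏ a, (qq a : ℝ) := by
    apply Finset.prod_pos
    intro a _
    exact_mod_cast hqqpos a
  have hMzne : Mz.det ≠ 0 := by
    intro h0
    rw [h0] at hdetMr
    simp only [Int.cast_zero] at hdetMr
    exact hdetD (by
      have := hdetMr.symm
      rcases mul_eq_zero.mp this with h | h
      · exact absurd h hqprodpos.ne'
      · exact h)
  have h1le : (1:ℝ) ≤ |((Mz.det : ℤ) : ℝ)| := by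
    have := Int.one_le_abs (by exact_mod_cast hMzne)
    calc (1:ℝ) ≤ ((|Mz.det| : ℤ) : ℝ) := by exact_mod_cast this
      _ = |((Mz.det : ℤ) : ℝ)| := by push_cast; rfl
  have hDbound : |D.det| ≤ (d.factorial : ℝ) * (2*ρ)^d := by
    have hent : ∀ i j, |D i j| ≤ 2*ρ := by
      intro i j
      have h1 : D i j = (ys i - y₀) j := by
        simp only [hD, Matrix.of_apply]
        rw [hvcoord]
        rfl
      rw [h1]
      calc |(ys i - y₀) j| ≤ ‖ys i - y₀‖ := PV.coord_abs_le_norm _ j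
        _ = dist (ys i) y₀ := by rw [dist_eq_norm]
        _ ≤ dist (ys i) c + dist c y₀ := dist_triangle _ _ _
        _ ≤ ρ + ρ := by
            have h2 := mem_closedBall.mp (hysball i)
            have h3 := mem_closedBall.mp hball₀
            rw [dist_comm c y₀]
            exact add_le_add h2 h3
        _ = 2*ρ := by ring
    have := Matrix.det_le (A := D) (abv := AbsoluteValue.abs) (x := 2*ρ) (fun i j => hent i j)
    simpa [nsmul_eq_mul] using this
  have hqprodle : (∏ a, (qq a : ℝ)) ≤ ((2*Q : ℕ) : ℝ)^(d+1) := by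
    calc (∏ a, (qq a : ℝ)) ≤ ∏ _a : Fin (d+1), ((2*Q : ℕ) : ℝ) := by
          apply Finset.prod_le_prod
          · intro a _; positivity
          · intro a _; exact_mod_cast (hqqQ a).2.le
      _ = ((2*Q : ℕ) : ℝ)^(d+1) := by
          rw [Finset.prod_const]
          simp
  have hfinal : (1:ℝ) ≤ ((2*Q : ℕ) : ℝ)^(d+1) * ((d.factorial : ℝ) * (2*ρ)^d) := by
    calc (1:ℝ) ≤ |((Mz.det : ℤ) : ℝ)| := h1le
      _ = (∏ a, (qq a : ℝ)) * |D.det| := by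
          rw [hdetMr, abs_mul, abs_of_nonneg hqprodpos.le]
      _ ≤ ((2*Q : ℕ) : ℝ)^(d+1) * ((d.factorial : ℝ) * (2*ρ)^d) := by
          apply mul_le_mul hqprodle hDbound (abs_nonneg _) (by positivity)
  rw [← mul_assoc] at hfinal
  exact absurd hsmall (not_lt.mpr hfinal)

section Supp
open Metric MeasureTheory
variable {E : Type*} [NormedAddCommGroup E] [NormedSpace ℝ E] [MeasurableSpace E]
  [OpensMeasurableSpace E] [SecondCountableTopology E]

theorem msupport_compl_null (μ : Measure E) : μ (msupport μ)ᶜ = 0 := by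
  apply measure_null_of_locally_null
  intro x hx
  simp only [msupport, Set.mem_compl_iff, Set.mem_setOf_eq, not_forall] at hx
  obtain ⟨r, hr, hr0⟩ := hx
  push_neg at hr0
  exact ⟨ball x r, mem_nhdsWithin_of_mem_nhds (ball_mem_nhds x hr), le_antisymm hr0 zero_le⟩

theorem msupport_subset {μ : Measure E} {K : Set E} (hK : IsClosed K) (hKc : μ Kᶜ = 0) :
    msupport μ ⊆ K := by
  intro x hx
  by_contra hxK
  obtain ⟨r, hr, hball⟩ := Metric.isOpen_iff.mp hK.isOpen_compl x hxK
  have h1 : μ (ball x r) = 0 := measure_mono_null hball hKc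
  exact absurd h1 (hx r hr).ne'

theorem msupport_isClosed (μ : Measure E) : IsClosed (msupport μ) := by
  rw [← isOpen_compl_iff, Metric.isOpen_iff]
  intro x hx
  simp only [msupport, Set.mem_compl_iff, Set.mem_setOf_eq, not_forall] at hx
  obtain ⟨r, hr, hr0⟩ := hx
  push_neg at hr0
  have hr0' : μ (ball x r) = 0 := le_antisymm hr0 zero_le
  refine ⟨r/2, by positivity, ?_⟩
  intro y hy
  simp only [msupport, Set.mem_compl_iff, Set.mem_setOf_eq, not_forall]
  refine ⟨r/2, by positivity, ?_⟩
  rw [not_lt, le_zero_iff]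
  have : ball y (r/2) ⊆ ball x r := by
    intro z hz
    rw [mem_ball] at *
    calc dist z x ≤ dist z y + dist y x := dist_triangle _ _ _
      _ < r/2 + r/2 := add_lt_add hz hy
      _ = r := by ring
  exact measure_mono_null this hr0'

end Supp
open Metric Filter in
theorem wapprox_subset_limsup (d : ℕ) (Ψ : ℕ → ℝ) (hΨpos : ∀ n, 0 < Ψ n) (hΨdec : Antitone Ψ) :
    WApprox d Ψ ⊆ Filter.limsup (fun k : ℕ =>
      {x : EuclideanSpace ℝ (Fin d) | ∃ q : ℕ, 2^k ≤ q ∧ q < 2^(k+1) ∧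
        ∃ p : Fin d → ℤ, ∀ i, |x i - (p i : ℝ) / (q : ℝ)| ≤ Ψ q}) atTop := by
  intro x hx
  rw [mem_limsup_iff_frequently_mem]
  rw [Filter.frequently_atTop]
  intro K
  set P := {pq : (Fin d → ℤ) × ℕ | 0 < pq.2 ∧
        ∀ i, |x i - (pq.1 i : ℝ) / (pq.2 : ℝ)| ≤ Ψ pq.2} with hP
  have hinf : P.Infinite := hx
  -- there is a pair with large denominator
  have hlarge : ∃ pq ∈ P, 2^K ≤ pq.2 := by
    by_contra hcon
    push_neg at hcon
    set M : ℤ := ⌈((2^K : ℕ) : ℝ) * (‖x‖ + Ψ 1)⌉ with hM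
    have hfin : (Set.Finite ((Set.univ.pi (fun _ : Fin d => Set.Icc (-M) M)) ×ˢ
        (Set.Iio (2^K : ℕ)))) :=
      Set.Finite.prod (Set.Finite.pi (fun _ => Set.finite_Icc _ _)) (Set.finite_Iio _)
    apply hinf
    apply Set.Finite.subset hfin
    rintro ⟨p, q⟩ hpq
    have hqlt : q < 2^K := hcon _ hpq
    obtain ⟨hq0, hbound⟩ := hpq
    have hq1 : 1 ≤ q := hq0
    constructor
    · -- coordinates bounded
      rw [Set.mem_univ_pi]
      intro i
      have h1 := hbound i
      have h2 : |(p i : ℝ) / q| ≤ ‖x‖ + Ψ q := by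
        have := abs_sub_abs_le_abs_sub ((p i : ℝ)/q) (x i)
        have h3 : |(p i : ℝ)/q - x i| ≤ Ψ q := by rwa [abs_sub_comm] at h1
        have h4 := PV.coord_abs_le_norm x i
        linarith
      have h5 : |(p i : ℝ)| ≤ ((2^K : ℕ) : ℝ) * (‖x‖ + Ψ 1) := by
        have hqr : (0:ℝ) < q := by exact_mod_cast hq0
        rw [abs_div] at h2
        have habsq : |((q:ℕ):ℝ)| = ((q:ℕ):ℝ) := abs_of_nonneg (by positivity)
        rw [habsq] at h2
        have h6 : |(p i : ℝ)| ≤ (q:ℝ) * (‖x‖ + Ψ q) := by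
          rw [div_le_iff₀ hqr] at h2
          linarith [h2]
        calc |(p i : ℝ)| ≤ (q:ℝ) * (‖x‖ + Ψ q) := h6
          _ ≤ ((2^K : ℕ) : ℝ) * (‖x‖ + Ψ 1) := by
              apply mul_le_mul
              · exact_mod_cast hqlt.le
              · have := hΨdec hq1
                linarith
              · have := hΨpos q
                have := norm_nonneg x
                linarith
              · positivity
      rw [Set.mem_Icc]
      have h7 : ((2^K:ℕ):ℝ) * (‖x‖ + Ψ 1) ≤ (M : ℝ) := Int.le_ceil _
      rw [abs_le] at h5
      constructor
      · exact_mod_cast le_trans (by linarith [h5.1] : -(M:ℝ) ≤ (p i : ℝ)) (le_refl _)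
      · exact_mod_cast le_trans h5.2 h7
    · exact hqlt
  obtain ⟨⟨p, q⟩, hpq, hqK⟩ := hlarge
  have hq0 : q ≠ 0 := by
    have := hpq.1; omega
  refine ⟨Nat.log 2 q, ?_, q, Nat.pow_log_le_self 2 hq0, Nat.lt_pow_succ_log_self (by norm_num) q,
    p, hpq.2⟩
  exact (Nat.le_log_iff_pow_le (by norm_num) hq0).mpr hqK

end PV

/-- Theorem (Pollington–Velani). -/
theorem pollington_velani
    (d : ℕ) (hd : 0 < d)
    (μ : Measure (EuclideanSpace ℝ (Fin d))) [IsFiniteMeasure μ]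
    (hcpt : ∃ K : Set (EuclideanSpace ℝ (Fin d)), IsCompact K ∧ μ Kᶜ = 0)
    (C₁ C₂ α : ℝ) (hC₁ : 0 < C₁) (hC₂ : 0 < C₂) (hα : 0 < α)
    (hdouble : ∀ x ∈ msupport μ, ∀ r : ℝ, 0 < r →
      μ (Metric.closedBall x (2 * r)) ≤ ENNReal.ofReal C₁ * μ (Metric.closedBall x r))
    (hdecay : ∀ x ∈ msupport μ, ∀ W : AffineSubspace ℝ (EuclideanSpace ℝ (Fin d)),
      (W : Set (EuclideanSpace ℝ (Fin d))).Nonempty → W ≠ ⊤ → ∀ r ε : ℝ,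
      0 < r → r ≤ 1 → 0 < ε →
      μ (affNbhd W (ε * r) ∩ Metric.closedBall x r) ≤
        ENNReal.ofReal (C₂ * ε ^ α) * μ (Metric.closedBall x r))
    (Ψ : ℕ → ℝ) (hΨpos : ∀ n, 0 < Ψ n) (hΨdec : Antitone Ψ)
    (hsum : Summable fun n : ℕ => (n : ℝ) ^ (α * ((d : ℝ) + 1) / d - 1) * Ψ n ^ α) :
    μ (WApprox d Ψ) = 0 := by
  classical
  obtain ⟨K, hKcpt, hKnull⟩ := hcpt
  have hdpos : (0:ℝ) < d := by exact_mod_cast hd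
  -- support facts
  have hsuppK : msupport μ ⊆ K := PV.msupport_subset hKcpt.isClosed hKnull
  have hsuppcpt : IsCompact (msupport μ) :=
    hKcpt.of_isClosed_subset (PV.msupport_isClosed μ) hsuppK
  have hsuppnull : μ (msupport μ)ᶜ = 0 := PV.msupport_compl_null μ
  -- constants
  set δ : ℝ := min 1 (1 / (2^(d+1) * d.factorial * 4^d * 2)) with hδ
  have hδpos : 0 < δ := by
    apply lt_min one_pos
    positivity
  have hδ1 : δ ≤ 1 := min_le_left _ _
  have hδd : (2:ℝ)^(d+1) * (d.factorial : ℝ) * 4^d * δ^d < 1 := by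
    have h1 : δ^d ≤ δ := by
      calc δ^d ≤ δ^1 := pow_le_pow_of_le_one hδpos.le hδ1 hd
        _ = δ := pow_one δ
    have h2 : δ ≤ 1 / (2^(d+1) * (d.factorial:ℝ) * 4^d * 2) := by
      have := min_le_right (1:ℝ) (1 / (2^(d+1) * d.factorial * 4^d * 2))
      rw [← hδ] at this
      exact this
    have h3 : (0:ℝ) < 2^(d+1) * (d.factorial:ℝ) * 4^d := by positivity
    calc (2:ℝ)^(d+1) * (d.factorial : ℝ) * 4^d * δ^d
        ≤ 2^(d+1) * (d.factorial:ℝ) * 4^d * (1 / (2^(d+1) * (d.factorial:ℝ) * 4^d * 2)) := by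
          apply mul_le_mul_of_nonneg_left (le_trans h1 h2) h3.le
      _ < 1 := by
          rw [mul_one_div, div_lt_one (by positivity)]
          nlinarith [h3]
  -- scales
  set X : ℕ → ℝ := fun k => ((2^k : ℕ) : ℝ) with hX
  have hXpos : ∀ k, 0 < X k := fun k => by positivity
  have hX1 : ∀ k, 1 ≤ X k := by
    intro k
    show (1:ℝ) ≤ ((2^k : ℕ) : ℝ)
    exact_mod_cast Nat.one_le_two_pow
  set ρ : ℕ → ℝ := fun k => δ * (X k) ^ (-(((d:ℝ)+1)/(d:ℝ))) with hρdef
  have hρpos : ∀ k, 0 < ρ k := fun k => mul_pos hδpos (Real.rpow_pos_of_pos (hXpos k) _)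
  have hρ1 : ∀ k, ρ k ≤ 1 := by
    intro k
    have h1 : (X k) ^ (-(((d:ℝ)+1)/(d:ℝ))) ≤ 1 :=
      Real.rpow_le_one_of_one_le_of_nonpos (hX1 k)
        (neg_nonpos_of_nonneg (by positivity))
    calc ρ k = δ * (X k) ^ (-(((d:ℝ)+1)/(d:ℝ))) := rfl
      _ ≤ 1 * 1 := mul_le_mul hδ1 h1 (Real.rpow_nonneg (hXpos k).le _) zero_le_one
      _ = 1 := mul_one 1
  have hid : ∀ k, (X k)^(d+1) * ((X k) ^ (-(((d:ℝ)+1)/(d:ℝ))))^d = 1 := by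
    intro k
    have hx := hXpos k
    have he : ((d+1:ℕ):ℝ) + (-(((d:ℝ)+1)/(d:ℝ)) * (d:ℝ)) = 0 := by
      have hdne : (d:ℝ) ≠ 0 := hdpos.ne'
      push_cast
      field_simp
      ring
    rw [← Real.rpow_natCast (X k) (d+1),
      ← Real.rpow_natCast ((X k) ^ (-(((d:ℝ)+1)/(d:ℝ)))) d,
      ← Real.rpow_mul hx.le, ← Real.rpow_add hx, he, Real.rpow_zero]
  have hsmall : ∀ k : ℕ, ((2*2^k : ℕ):ℝ)^(d+1) * (Nat.factorial d : ℝ) * (2*(2*ρ k))^d < 1 := by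
    intro k
    have h1 : ((2*2^k : ℕ):ℝ) = 2 * X k := by rw [hX]; push_cast; ring
    have h2 : (2*(2*ρ k)) = (4*δ) * (X k) ^ (-(((d:ℝ)+1)/(d:ℝ))) := by
      rw [hρdef]; ring
    rw [h1, h2, mul_pow, mul_pow]
    calc (2:ℝ)^(d+1) * (X k)^(d+1) * (Nat.factorial d : ℝ)
          * ((4*δ)^d * ((X k) ^ (-(((d:ℝ)+1)/(d:ℝ))))^d)
        = ((2:ℝ)^(d+1) * (Nat.factorial d : ℝ) * 4^d * δ^d)
          * ((X k)^(d+1) * ((X k) ^ (-(((d:ℝ)+1)/(d:ℝ))))^d) := by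
          rw [mul_pow]
          ring
      _ = (2:ℝ)^(d+1) * (Nat.factorial d : ℝ) * 4^d * δ^d := by rw [hid k, mul_one]
      _ < 1 := hδd
  -- summability
  set κ : ℝ := α * ((d:ℝ)+1)/(d:ℝ) with hκdef
  have hκpos : 0 < κ := by
    apply div_pos (mul_pos hα (by positivity)) hdpos
  have hb : Summable (fun k : ℕ => (X k) ^ κ * Ψ (2^k) ^ α) :=
    PV.condensation hΨpos hΨdec hα hκpos hsum
  -- the normalized quantity tends to zero
  set t : ℕ → ℝ := fun k => Ψ (2^k) * (X k)^(((d:ℝ)+1)/(d:ℝ)) with ht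
  have htnn : ∀ k, 0 ≤ t k := fun k =>
    mul_nonneg (hΨpos _).le (Real.rpow_nonneg (hXpos k).le _)
  have htα : ∀ k, t k ^ α = (X k)^κ * Ψ (2^k)^α := by
    intro k
    rw [ht]
    simp only []
    rw [Real.mul_rpow (hΨpos _).le (Real.rpow_nonneg (hXpos k).le _),
      ← Real.rpow_mul (hXpos k).le,
      show ((d:ℝ)+1)/(d:ℝ) * α = κ by rw [hκdef]; ring]
    ring
  have htlim : Filter.Tendsto t Filter.atTop (nhds 0) := by
    have h0 : Filter.Tendsto (fun k => (X k)^κ * Ψ (2^k)^α) Filter.atTop (nhds 0) :=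
      hb.tendsto_atTop_zero
    have h1 : t = fun k => ((X k)^κ * Ψ (2^k)^α) ^ (1/α) := by
      funext k
      rw [← htα k, ← Real.rpow_mul (htnn k), mul_one_div, div_self hα.ne', Real.rpow_one]
    rw [h1]
    have h2 := h0.rpow_const (p := 1/α) (Or.inr (by positivity))
    rw [Real.zero_rpow (one_div_pos.mpr hα).ne'] at h2
    exact h2
  obtain ⟨K₀, hK₀⟩ := Filter.eventually_atTop.mp
    (htlim.eventually_lt_const (by positivity : (0:ℝ) < δ/(d:ℝ)))
  have hdist : ∀ k, K₀ ≤ k → (d:ℝ) * Ψ (2^k) ≤ ρ k := by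
    intro k hk
    have h1 : (d:ℝ) * t k ≤ δ := by
      have h2 := hK₀ k hk
      have h3 : (d:ℝ) * t k < (d:ℝ) * (δ/(d:ℝ)) := by
        exact mul_lt_mul_of_pos_left h2 hdpos
      rw [mul_div_cancel₀ _ hdpos.ne'] at h3
      exact h3.le
    have h2 : Ψ (2^k) = t k * (X k) ^ (-(((d:ℝ)+1)/(d:ℝ))) := by
      rw [ht]
      simp only []
      rw [mul_assoc, ← Real.rpow_add (hXpos k)]
      simp
    rw [h2, hρdef, ← mul_assoc]
    exact mul_le_mul_of_nonneg_right h1 (Real.rpow_nonneg (hXpos k).le _)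
  -- the resonant sets
  set S : ℕ → Set (EuclideanSpace ℝ (Fin d)) := fun k =>
    {x | ∃ q : ℕ, 2^k ≤ q ∧ q < 2^(k+1) ∧
      ∃ p : Fin d → ℤ, ∀ i, |x i - (p i : ℝ)/(q:ℝ)| ≤ Ψ q} with hSdef
  have hWsub : WApprox d Ψ ⊆ Filter.limsup S Filter.atTop :=
    PV.wapprox_subset_limsup d Ψ hΨpos hΨdec
  -- the main per-scale estimate
  have hSk : ∀ k, K₀ ≤ k → μ (S k) ≤ ENNReal.ofReal (C₂ * ((d:ℝ) * Ψ (2^k) / ρ k)^α) *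
      (ENNReal.ofReal C₁ * ENNReal.ofReal C₁ * μ Set.univ) := by
    intro k hkK
    have hrk : 0 < ρ k := hρpos k
    obtain ⟨F, hFsupp, hFsep, hFcov⟩ := PV.sep_cover hsuppcpt hrk
    set ε : ℝ := (d:ℝ) * Ψ (2^k) / ρ k with hε
    have hεpos : 0 < ε := div_pos (mul_pos hdpos (hΨpos _)) hrk
    have hball : ∀ x ∈ F, μ (S k ∩ Metric.closedBall x (ρ k)) ≤
        ENNReal.ofReal (C₂ * ε^α) * μ (Metric.closedBall x (ρ k)) := by
      intro x hxF
      rcases (S k ∩ Metric.closedBall x (ρ k)).eq_empty_or_nonempty with he | hne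
      · rw [he]
        simp
      · set R : Set (EuclideanSpace ℝ (Fin d)) := {y |
          (∃ p : Fin d → ℤ, ∃ q : ℕ, 2^k ≤ q ∧ q < 2*2^k ∧ ∀ i, y i = (p i : ℝ)/(q:ℝ))
          ∧ y ∈ Metric.closedBall x (2*(ρ k))} with hRdef
        set W := affineSpan ℝ R with hWdef
        have hWne : W ≠ ⊤ :=
          PV.rat_span_ne_top hd (2^k) (by positivity) (by positivity) x (hsmall k)
        have hkey : ∀ z ∈ S k ∩ Metric.closedBall x (ρ k),
            ∃ y ∈ R, dist z y ≤ (d:ℝ) * Ψ (2^k) := by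
          rintro z ⟨hzS, hzB⟩
          obtain ⟨q, hq1, hq2, p, hp⟩ := hzS
          set y : EuclideanSpace ℝ (Fin d) := WithLp.toLp 2 (fun i => (p i : ℝ)/(q:ℝ)) with hy
          have hdzy : dist z y ≤ (d:ℝ) * Ψ (2^k) := by
            rw [dist_eq_norm]
            calc ‖z - y‖ ≤ ∑ i, |(z-y) i| := PV.norm_le_sum_abs _
              _ ≤ ∑ _i : Fin d, Ψ q := by
                  apply Finset.sum_le_sum
                  intro i _
                  have hzi : (z - y) i = z i - y i := rfl
                  rw [hzi, hy]
                  exact hp i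
              _ = (d:ℝ) * Ψ q := by
                  rw [Finset.sum_const, Finset.card_univ, Fintype.card_fin, nsmul_eq_mul]
              _ ≤ (d:ℝ) * Ψ (2^k) :=
                  mul_le_mul_of_nonneg_left (hΨdec hq1) (by positivity)
          refine ⟨y, ⟨⟨p, q, hq1, by
            have h2k : 2^(k+1) = 2*2^k := by ring
            omega, fun i => rfl⟩, ?_⟩, hdzy⟩
          rw [Metric.mem_closedBall]
          calc dist y x ≤ dist y z + dist z x := dist_triangle _ _ _
            _ ≤ (d:ℝ)*Ψ (2^k) + ρ k := by
                apply add_le_add _ (Metric.mem_closedBall.mp hzB)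
                rw [dist_comm]
                exact hdzy
            _ ≤ ρ k + ρ k := add_le_add_left (hdist k hkK) _
            _ = 2*(ρ k) := by ring
        have hWnonempty : (W : Set (EuclideanSpace ℝ (Fin d))).Nonempty := by
          obtain ⟨z, hz⟩ := hne
          obtain ⟨y, hyR, -⟩ := hkey z hz
          exact ⟨y, subset_affineSpan ℝ R hyR⟩
        have hincl : S k ∩ Metric.closedBall x (ρ k) ⊆
            affNbhd W (ε * ρ k) ∩ Metric.closedBall x (ρ k) := by
          intro z hz
          obtain ⟨y, hyR, hdzy⟩ := hkey z hz
          refine ⟨?_, hz.2⟩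
          show Metric.infDist z (W : Set (EuclideanSpace ℝ (Fin d))) ≤ ε * ρ k
          have hyW : y ∈ (W : Set (EuclideanSpace ℝ (Fin d))) := subset_affineSpan ℝ R hyR
          calc Metric.infDist z (W : Set (EuclideanSpace ℝ (Fin d))) ≤ dist z y :=
                Metric.infDist_le_dist_of_mem hyW
            _ ≤ (d:ℝ) * Ψ (2^k) := hdzy
            _ = ε * ρ k := by
                rw [hε]
                field_simp
        have hdec := hdecay x (hFsupp hxF) W hWnonempty hWne (ρ k) ε hrk (hρ1 k) hεpos
        exact le_trans (measure_mono hincl) hdec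
    calc μ (S k) ≤ μ (S k ∩ msupport μ) + μ (S k \ msupport μ) :=
          measure_le_inter_add_diff μ _ _
      _ ≤ μ (⋃ x ∈ F, S k ∩ Metric.closedBall x (ρ k)) + 0 := by
          apply add_le_add
          · apply measure_mono
            rintro z ⟨hz1, hz2⟩
            have := hFcov hz2
            simp only [Set.mem_iUnion] at this ⊢
            obtain ⟨x, hx1, hx2⟩ := this
            exact ⟨x, hx1, hz1, hx2⟩
          · exact (measure_mono_null (fun z hz => hz.2) hsuppnull).le
      _ = μ (⋃ x ∈ F, S k ∩ Metric.closedBall x (ρ k)) := add_zero _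
      _ ≤ ∑ x ∈ F, μ (S k ∩ Metric.closedBall x (ρ k)) := measure_biUnion_finset_le F _
      _ ≤ ∑ x ∈ F, ENNReal.ofReal (C₂ * ε^α) * μ (Metric.closedBall x (ρ k)) :=
          Finset.sum_le_sum hball
      _ = ENNReal.ofReal (C₂ * ε^α) * ∑ x ∈ F, μ (Metric.closedBall x (ρ k)) := by
          rw [Finset.mul_sum]
      _ ≤ ENNReal.ofReal (C₂ * ε^α) * (ENNReal.ofReal C₁ * ENNReal.ofReal C₁ * μ Set.univ) := by
          apply mul_le_mul_right
          calc ∑ x ∈ F, μ (Metric.closedBall x (ρ k))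
              ≤ ∑ x ∈ F, ENNReal.ofReal C₁ * (ENNReal.ofReal C₁ *
                  μ (Metric.closedBall x (ρ k/3))) := by
                apply Finset.sum_le_sum
                intro x hxF
                have hd1 := hdouble x (hFsupp hxF) (2*(ρ k/3)) (by positivity)
                have hd2 := hdouble x (hFsupp hxF) (ρ k/3) (by positivity)
                calc μ (Metric.closedBall x (ρ k))
                    ≤ μ (Metric.closedBall x (2*(2*(ρ k/3)))) := by
                      apply measure_mono
                      apply Metric.closedBall_subset_closedBall
                      linarith
                  _ ≤ ENNReal.ofReal C₁ * μ (Metric.closedBall x (2*(ρ k/3))) := hd1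
                  _ ≤ ENNReal.ofReal C₁ * (ENNReal.ofReal C₁ * μ (Metric.closedBall x (ρ k/3))) :=
                      mul_le_mul_right hd2 _
            _ = ENNReal.ofReal C₁ * ENNReal.ofReal C₁ *
                ∑ x ∈ F, μ (Metric.closedBall x (ρ k/3)) := by
                rw [← Finset.mul_sum, ← Finset.mul_sum, mul_assoc]
            _ ≤ ENNReal.ofReal C₁ * ENNReal.ofReal C₁ * μ Set.univ := by
                apply mul_le_mul_right
                have hdisj : (F : Set (EuclideanSpace ℝ (Fin d))).PairwiseDisjoint
                    (fun x => Metric.closedBall x (ρ k/3)) := by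
                  intro a ha b hb hab
                  apply Metric.closedBall_disjoint_closedBall
                  have := hFsep a (Finset.mem_coe.mp ha) b (Finset.mem_coe.mp hb) hab
                  linarith
                rw [← measure_biUnion_finset hdisj (fun x _ => measurableSet_closedBall)]
                exact measure_mono (Set.subset_univ _)
  -- summing up
  set Cb : ℝ := C₂ * ((d:ℝ)/δ)^α with hCb
  have hCbnn : 0 ≤ Cb := mul_nonneg hC₂.le (Real.rpow_nonneg (by positivity) _)
  have hεb : ∀ k, C₂ * ((d:ℝ) * Ψ (2^k) / ρ k)^α = Cb * ((X k)^κ * Ψ (2^k)^α) := by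
    intro k
    have h1 : (d:ℝ) * Ψ (2^k) / ρ k = ((d:ℝ)/δ) * t k := by
      rw [hρdef, ht]
      simp only []
      rw [Real.rpow_neg (hXpos k).le]
      have hXκ : (X k) ^ (((d:ℝ)+1)/(d:ℝ)) ≠ 0 := (Real.rpow_pos_of_pos (hXpos k) _).ne'
      field_simp
    rw [h1, Real.mul_rpow (by positivity) (htnn k), htα k, hCb]
    ring
  have htsum : ∑' k, μ (S k) ≠ ⊤ := by
    set g : ℕ → ENNReal := fun k =>
      ENNReal.ofReal (Cb * ((X k)^κ * Ψ (2^k)^α)) *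
        (ENNReal.ofReal C₁ * ENNReal.ofReal C₁ * μ Set.univ) +
      (if k < K₀ then μ Set.univ else 0) with hg
    have hle : ∀ k, μ (S k) ≤ g k := by
      intro k
      by_cases hk : k < K₀
      · calc μ (S k) ≤ μ Set.univ := measure_mono (Set.subset_univ _)
          _ ≤ g k := by
              rw [hg]
              simp only [if_pos hk]
              exact le_add_self
      · push_neg at hk
        have h1 := hSk k hk
        rw [hεb k] at h1
        calc μ (S k) ≤ ENNReal.ofReal (Cb * ((X k)^κ * Ψ (2^k)^α)) *
            (ENNReal.ofReal C₁ * ENNReal.ofReal C₁ * μ Set.univ) := h1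
          _ ≤ g k := by
              rw [hg]
              simp only [if_neg (not_lt.mpr hk), add_zero]
              exact le_refl _
    apply ne_top_of_le_ne_top _ (ENNReal.tsum_le_tsum hle)
    rw [hg, ENNReal.tsum_add]
    apply ENNReal.add_ne_top.mpr
    constructor
    · rw [ENNReal.tsum_mul_right]
      apply ENNReal.mul_ne_top
      · rw [← ENNReal.ofReal_tsum_of_nonneg]
        · exact ENNReal.ofReal_ne_top
        · intro n
          apply mul_nonneg hCbnn
          exact mul_nonneg (Real.rpow_nonneg (hXpos n).le _) (Real.rpow_nonneg (hΨpos _).le _)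
        · exact hb.mul_left Cb
      · exact ENNReal.mul_ne_top (ENNReal.mul_ne_top ENNReal.ofReal_ne_top ENNReal.ofReal_ne_top)
          (measure_ne_top μ _)
    · rw [tsum_eq_sum (s := Finset.range K₀) (fun k hk => by
        rw [if_neg (by simpa using hk)])]
      apply (ENNReal.sum_lt_top.mpr _).ne
      intro k _
      split
      · exact measure_lt_top μ _
      · simp
  have h0 := measure_limsup_atTop_eq_zero htsum
  exact le_antisymm (le_trans (measure_mono hWsub) (le_of_eq h0)) zero_le
end
end

section
/- Let μ be a compactly supported finite Borel measure on ℝ^d and suppose there exist C₁, C₂, α > 0 such that: (1) for every x in the support of μ and every r > 0, μ(B(x,2r)) ≤ C₁ μ(B(x,r)); and (2) for every x in the support of μ, every affine subspace W ⊊ ℝ^d, every r with 0 < r ≤ 1 and every ε > 0, μ(W^{(εr)} ∩ B(x,r)) ≤ C₂ ε^α μ(B(x,r)). Then for every β > 1/α, the set of x ∈ ℝ^d for which max_{1≤i≤d} |x_i − p_i/q| ≤ q^{−(d+1)/d}(log q)^{−β} holds for infinitely many pairs (p,q) ∈ ℤ^d × ℕ with q ≥ 2 has μ-measure zero. -/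
noncomputable section
open MeasureTheory Metric Filter Topology

variable {E : Type*} [NormedAddCommGroup E] [NormedSpace ℝ E]

set_option maxHeartbeats 1000000

lemma coord_le_norm {d : ℕ} (x : EuclideanSpace ℝ (Fin d)) (i : Fin d) : |x i| ≤ ‖x‖ := by
  rw [EuclideanSpace.norm_eq]
  rw [← Real.sqrt_sq_eq_abs]
  apply Real.sqrt_le_sqrt
  calc (x i)^2 = ‖x i‖^2 := by rw [Real.norm_eq_abs, sq_abs]
  _ ≤ _ := Finset.single_le_sum (f := fun j => ‖x j‖^2) (fun j _ => by positivity) (Finset.mem_univ i)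

lemma msupport_compl_null {d : ℕ} (μ : Measure (EuclideanSpace ℝ (Fin d))) :
    μ (msupport μ)ᶜ = 0 := by
  apply measure_null_of_locally_null
  intro x hx
  simp only [msupport, Set.mem_compl_iff, Set.mem_setOf_eq, not_forall] at hx
  obtain ⟨r, hr, hμ⟩ := hx
  push_neg at hμ
  exact ⟨Metric.ball x r, nhdsWithin_le_nhds (Metric.ball_mem_nhds x hr),
    le_antisymm hμ zero_le⟩

lemma exists_net {E : Type*} [NormedAddCommGroup E] {K : Set E} (hK : IsCompact K)
    {r : ℝ} (hr : 0 < r) :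
    ∃ M : Set E, M ⊆ K ∧ M.Finite ∧ (M.Pairwise fun x y => r ≤ dist x y) ∧
      K ⊆ ⋃ x ∈ M, Metric.closedBall x r := by
  have hchainc : ∀ c ⊆ {M : Set E | M ⊆ K ∧ M.Pairwise fun x y => r ≤ dist x y},
      IsChain (· ⊆ ·) c → ∃ ub ∈ {M : Set E | M ⊆ K ∧ M.Pairwise fun x y => r ≤ dist x y},
        ∀ s ∈ c, s ⊆ ub := by
    intro c hc hchain
    refine ⟨⋃₀ c, ⟨?_, ?_⟩, fun s hs => Set.subset_sUnion_of_mem hs⟩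
    · exact Set.sUnion_subset fun s hs => (hc hs).1
    · intro x hx y hy hxy
      obtain ⟨s, hs, hxs⟩ := hx
      obtain ⟨t, ht, hyt⟩ := hy
      rcases hchain.total hs ht with h | h
      · exact (hc ht).2 (h hxs) hyt hxy
      · exact (hc hs).2 hxs (h hyt) hxy
  obtain ⟨M, hM⟩ := zorn_subset _ hchainc
  obtain ⟨⟨hMK, hsep⟩, hmax⟩ := hM
  have hcover : K ⊆ ⋃ x ∈ M, Metric.closedBall x r := by
    intro y hy
    by_contra hyn
    simp only [Set.mem_iUnion, Metric.mem_closedBall, not_exists, not_le] at hyn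
    have hyM : y ∉ M := fun h => absurd (hyn y h) (by simpa using hr.le)
    have : insert y M ∈ {M : Set E | M ⊆ K ∧ M.Pairwise fun x y => r ≤ dist x y} := by
      constructor
      · exact Set.insert_subset hy hMK
      · apply hsep.insert
        intro x hx hxy
        constructor
        · exact le_of_lt (dist_comm y x ▸ hyn x hx)
        · exact le_of_lt (dist_comm x y ▸ hyn x hx)
    have := hmax this (Set.subset_insert y M)
    exact hyM (this (Set.mem_insert y M))
  refine ⟨M, hMK, ?_, hsep, hcover⟩
  -- finiteness: cover K by balls of radius r/2; each contains at most one point of M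
  obtain ⟨T, hTK, hTfin, hTcover⟩ := hK.finite_cover_balls (e := r/2) (by linarith)
  have hchoice : ∀ x ∈ M, ∃ c ∈ T, x ∈ Metric.ball c (r/2) := by
    intro x hx
    have := hTcover (hMK hx)
    simpa using this
  choose f hfT hfball using hchoice
  have hinj : Set.InjOn (fun x : M => f x x.2) Set.univ := by
    intro ⟨x, hx⟩ _ ⟨y, hy⟩ _ hxy
    simp only at hxy
    by_contra hne
    have hne' : x ≠ y := fun h => hne (by simp [h])
    have h1 := hfball x hx
    have h2 := hfball y hy
    rw [hxy] at h1
    have : dist x y < r := by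
      calc dist x y ≤ dist x (f y hy) + dist (f y hy) y := dist_triangle _ _ _
      _ < r/2 + r/2 := by
          rw [Metric.mem_ball] at h1 h2
          rw [dist_comm (f y hy) y]; linarith
      _ = r := by ring
    exact absurd (hsep hx hy hne') (not_le.mpr this)
  have : Set.Finite (Set.univ : Set M) := by
    apply Set.Finite.of_finite_image _ hinj
    apply hTfin.subset
    rintro _ ⟨⟨x, hx⟩, _, rfl⟩
    exact hfT x hx
  have : Finite M := Set.finite_univ_iff.mp this
  exact Set.toFinite M

lemma euclid_sum_coord {d : ℕ} {n : Type*} (s : Finset n) (f : n → EuclideanSpace ℝ (Fin d))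
    (i : Fin d) : (∑ k ∈ s, f k) i = ∑ k ∈ s, f k i := by
  classical
  induction s using Finset.induction_on with
  | empty => simp
  | insert a s h ih => rw [Finset.sum_insert h, Finset.sum_insert h, PiLp.add_apply, ih]

lemma rat_points_not_span {d : ℕ} (Q : ℕ) (z : EuclideanSpace ℝ (Fin d)) (ρ : ℝ) (hρ : 0 ≤ ρ)
    (hsmall : (d.factorial : ℝ) * (2*ρ)^d * (Q:ℝ)^(d+1) < 1) :
    affineSpan ℝ {v : EuclideanSpace ℝ (Fin d) |
      (∃ p : Fin d → ℤ, ∃ q : ℕ, 0 < q ∧ q < Q ∧ ∀ i, v i = (p i : ℝ) / q) ∧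
        v ∈ Metric.closedBall z ρ} ≠ ⊤ := by
  set R := {v : EuclideanSpace ℝ (Fin d) |
      (∃ p : Fin d → ℤ, ∃ q : ℕ, 0 < q ∧ q < Q ∧ ∀ i, v i = (p i : ℝ) / q) ∧
        v ∈ Metric.closedBall z ρ} with hR
  intro htop
  -- R is nonempty
  have hRne : R.Nonempty := by
    rw [← affineSpan_nonempty (k := ℝ), htop]
    exact ⟨z, trivial⟩
  obtain ⟨v₀, hv₀⟩ := hRne
  -- vector span is everything
  have hvspan : vectorSpan ℝ R = ⊤ := by
    have := AffineSubspace.direction_top ℝ (EuclideanSpace ℝ (Fin d)) (EuclideanSpace ℝ (Fin d))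
    rw [← this, ← htop, direction_affineSpan]
  have hsspan : Submodule.span ℝ ((fun x => x - v₀) '' R) = ⊤ := by
    rw [vectorSpan_eq_span_vsub_set_right ℝ hv₀] at hvspan
    simpa [vsub_eq_sub] using hvspan
  -- extract a linearly independent spanning subset
  obtain ⟨b, hbs, hbspan, hbli⟩ := exists_linearIndependent ℝ ((fun x => x - v₀) '' R)
  rw [hsspan] at hbspan
  have hbfin : b.Finite := by
    have : Finite b := hbli.finite
    exact Set.toFinite b
  have hbfintype : Fintype b := hbfin.fintype
  have hbcard : b.toFinset.card = d := by
    have h1 := finrank_span_set_eq_card (s := b) hbli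
    rw [hbspan] at h1
    rw [← h1]
    simp [finrank_euclideanSpace_fin]
  have hcard : Fintype.card b = d := by rwa [Set.toFinset_card] at hbcard
  set e := (Fintype.equivFinOfCardEq hcard).symm with he
  set u : Fin d → EuclideanSpace ℝ (Fin d) := fun k => (e k : EuclideanSpace ℝ (Fin d)) with hu
  have huli : LinearIndependent ℝ u := hbli.comp e e.injective
  -- preimages in R
  have hw : ∀ k, ∃ w ∈ R, u k = w - v₀ := by
    intro k
    have : (u k : EuclideanSpace ℝ (Fin d)) ∈ b := (e k).2
    obtain ⟨w, hwR, hweq⟩ := hbs this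
    exact ⟨w, hwR, hweq.symm⟩
  choose w hwR hwu using hw
  -- rational data
  have hv₀R := hv₀
  obtain ⟨⟨p₀, q₀, hq₀pos, hq₀lt, hp₀⟩, hv₀ball⟩ := hv₀R
  have hwrat : ∀ k, ∃ p : Fin d → ℤ, ∃ q : ℕ, 0 < q ∧ q < Q ∧ ∀ i, w k i = (p i : ℝ) / q :=
    fun k => (hwR k).1
  choose p q hqpos hqlt hp using hwrat
  have hwball : ∀ k, w k ∈ Metric.closedBall z ρ := fun k => (hwR k).2
  -- assemble matrices over ι = Fin 1 ⊕ Fin d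
  set V : Fin 1 ⊕ Fin d → EuclideanSpace ℝ (Fin d) := Sum.elim (fun _ => v₀) w with hV
  set P : Fin 1 ⊕ Fin d → Fin d → ℤ := Sum.elim (fun _ => p₀) p with hP
  set qq : Fin 1 ⊕ Fin d → ℕ := Sum.elim (fun _ => q₀) q with hqq
  have hqqpos : ∀ j, 0 < qq j := by rintro (j|j) <;> simp [hqq, hq₀pos, hqpos]
  have hqqlt : ∀ j, qq j < Q := by rintro (j|j) <;> simp [hqq, hq₀lt, hqlt]
  have hVP : ∀ j i, V j i = (P j i : ℝ) / qq j := by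
    rintro (j|j) i <;> simp [hV, hP, hqq, hp₀, hp]
  have hVball : ∀ j, V j ∈ Metric.closedBall z ρ := by
    rintro (j|j) <;> simp [hV, hwball]
    · exact Metric.mem_closedBall.mp hv₀ball
  set M : Matrix (Fin 1 ⊕ Fin d) (Fin 1 ⊕ Fin d) ℝ :=
    Matrix.fromBlocks 1 (Matrix.of fun _ i => v₀ i) (Matrix.of fun _ _ => 1)
      (Matrix.of fun k i => w k i) with hM
  set N : Matrix (Fin 1 ⊕ Fin d) (Fin 1 ⊕ Fin d) ℤ :=
    fun j c => Sum.elim (fun _ => (qq j : ℤ)) (fun i => P j i) c with hN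
  -- N cast equals diagonal * M
  have hcast : (Int.castRingHom ℝ).mapMatrix N = Matrix.diagonal (fun j => (qq j : ℝ)) * M := by
    ext j c
    rw [Matrix.diagonal_mul]
    rcases c with c | i
    · rcases j with j | j <;>
        simp [hN, hM, Matrix.one_apply, Fin.fin_one_eq_zero]
      all_goals exact Int.cast_natCast _
    · have h := hVP j i
      have hq0 : (qq j : ℝ) ≠ 0 := Nat.cast_ne_zero.mpr (hqqpos j).ne'
      have hMji : M j (Sum.inr i) = V j i := by
        rcases j with j | j <;> simp [hM, hV]
      simp only [RingHom.mapMatrix_apply, Matrix.map_apply, eq_intCast, Int.cast_id, hN,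
        Sum.elim_inr]
      rw [hMji, h]
      field_simp
      rfl
  -- determinant relation
  have hdet : ((N.det : ℤ) : ℝ) = (∏ j, (qq j : ℝ)) * M.det := by
    have h := congrArg Matrix.det hcast
    rw [← RingHom.map_det, Matrix.det_mul, Matrix.det_diagonal] at h
    simpa using h
  -- rows of M are linearly independent
  have hrows : LinearIndependent ℝ (fun j => M j) := by
    rw [Fintype.linearIndependent_iff]
    intro g hg
    have hMinl : ∀ j, M j (Sum.inl 0) = 1 := by
      rintro (j | j)
      · simp [hM, Matrix.one_apply, Subsingleton.elim j (0 : Fin 1)]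
      · simp [hM]
    have hMinr : ∀ j i, M j (Sum.inr i) = V j i := by
      rintro (j | j) i <;> simp [hM, hV]
    have h1 : g (Sum.inl 0) + ∑ k, g (Sum.inr k) = 0 := by
      have h := congrFun hg (Sum.inl 0)
      simp only [Finset.sum_apply, Pi.smul_apply, smul_eq_mul, Pi.zero_apply] at h
      rw [Fintype.sum_sum_type] at h
      simpa [hMinl] using h
    have h2 : ∀ i, g (Sum.inl 0) * v₀ i + ∑ k, g (Sum.inr k) * w k i = 0 := by
      intro i
      have h := congrFun hg (Sum.inr i)
      simp only [Finset.sum_apply, Pi.smul_apply, smul_eq_mul, Pi.zero_apply] at h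
      rw [Fintype.sum_sum_type] at h
      simpa [hMinr, hV] using h
    have hkey : ∑ k, g (Sum.inr k) • u k = 0 := by
      ext i
      have hcoord : (∑ k, g (Sum.inr k) • u k) i = ∑ k, g (Sum.inr k) * (w k i - v₀ i) := by
        rw [euclid_sum_coord]
        refine Finset.sum_congr rfl fun k _ => ?_
        rw [PiLp.smul_apply, hwu k, smul_eq_mul, PiLp.sub_apply]
      rw [hcoord]
      have hexp : ∑ k, g (Sum.inr k) * (w k i - v₀ i)
          = (∑ k, g (Sum.inr k) * w k i) - (∑ k, g (Sum.inr k)) * v₀ i := by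
        have hterm : ∀ k, g (Sum.inr k) * (w k i - v₀ i)
            = g (Sum.inr k) * w k i - g (Sum.inr k) * v₀ i := fun k => by ring
        simp_rw [hterm]
        rw [Finset.sum_sub_distrib, Finset.sum_mul]
      rw [hexp]
      have := h2 i
      have h1' := h1
      show _ = (0 : ℝ)
      linear_combination this - (v₀ i) * h1'
    have hzero : ∀ k, g (Sum.inr k) = 0 :=
      Fintype.linearIndependent_iff.mp huli _ hkey
    rintro (j | k)
    · have : j = 0 := Subsingleton.elim _ _
      subst this
      have : ∑ k, g (Sum.inr k) = 0 := Finset.sum_eq_zero fun k _ => hzero k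
      linarith [h1]
    · exact hzero k
  have hMunit : IsUnit M := Matrix.linearIndependent_rows_iff_isUnit.mp hrows
  have hMdet_ne : M.det ≠ 0 := by
    have := (Matrix.isUnit_iff_isUnit_det M).mp hMunit
    exact this.ne_zero
  -- N.det is a nonzero integer
  have hNdet_ne : N.det ≠ 0 := by
    intro h0
    rw [h0] at hdet
    simp only [Int.cast_zero] at hdet
    have hprod : (0:ℝ) < ∏ j, (qq j : ℝ) :=
      Finset.prod_pos fun j _ => by exact_mod_cast hqqpos j
    exact hMdet_ne (by
      rcases mul_eq_zero.mp hdet.symm with h | h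
      · exact absurd h hprod.ne'
      · exact h)
  have h1le : (1:ℝ) ≤ |((N.det : ℤ) : ℝ)| := by
    have := Int.one_le_abs hNdet_ne
    calc (1:ℝ) = ((1:ℤ):ℝ) := by norm_num
    _ ≤ ((|N.det| : ℤ) : ℝ) := by exact_mod_cast this
    _ = |((N.det : ℤ) : ℝ)| := by push_cast; ring
  -- compute det M as det of difference matrix
  set U : Matrix (Fin d) (Fin d) ℝ := Matrix.of fun k i => w k i - v₀ i with hU
  have hMdetU : M.det = U.det := by
    rw [hM, Matrix.det_fromBlocks_one₁₁]
    congr 1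
    ext k i
    simp [Matrix.mul_apply, hU]
  -- entrywise bound on U
  have hUabs : ∀ k i, |U k i| ≤ 2 * ρ := by
    intro k i
    have h1 : |w k i - z i| ≤ ρ := by
      have := coord_le_norm (w k - z) i
      rw [PiLp.sub_apply] at this
      calc |w k i - z i| ≤ ‖w k - z‖ := this
      _ = dist (w k) z := (dist_eq_norm _ _).symm
      _ ≤ ρ := Metric.mem_closedBall.mp (hwball k)
    have h2 : |z i - v₀ i| ≤ ρ := by
      have := coord_le_norm (z - v₀) i
      rw [PiLp.sub_apply] at this
      calc |z i - v₀ i| ≤ ‖z - v₀‖ := this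
      _ = dist v₀ z := by rw [← dist_eq_norm, dist_comm]
      _ ≤ ρ := Metric.mem_closedBall.mp hv₀ball
    calc |U k i| = |(w k i - z i) + (z i - v₀ i)| := by
          rw [hU]; congr 1; simp only [Matrix.of_apply]; ring
    _ ≤ |w k i - z i| + |z i - v₀ i| := abs_add_le _ _
    _ ≤ ρ + ρ := add_le_add h1 h2
    _ = 2 * ρ := by ring
  have hUdet : |U.det| ≤ (d.factorial : ℝ) * (2*ρ)^d := by
    have := Matrix.det_le (A := U) (abv := AbsoluteValue.abs)
      (x := 2*ρ) (fun i j => hUabs i j)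
    simpa [nsmul_eq_mul] using this
  -- upper bound on the integer determinant
  have hprodle : ∏ j, (qq j : ℝ) ≤ (Q:ℝ)^(d+1) := by
    calc ∏ j, (qq j : ℝ) ≤ ∏ _j : Fin 1 ⊕ Fin d, (Q:ℝ) := by
          apply Finset.prod_le_prod
          · intro j _; positivity
          · intro j _; exact_mod_cast (hqqlt j).le
    _ = (Q:ℝ)^(Fintype.card (Fin 1 ⊕ Fin d)) := by rw [Finset.prod_const, Finset.card_univ]
    _ = (Q:ℝ)^(d+1) := by congr 1; simp [Fintype.card_sum]; ring
  have hQ0 : (0:ℝ) ≤ (Q:ℝ)^(d+1) := by positivity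
  have hfinal : (1:ℝ) ≤ (d.factorial : ℝ) * (2*ρ)^d * (Q:ℝ)^(d+1) := by
    calc (1:ℝ) ≤ |((N.det : ℤ) : ℝ)| := h1le
    _ = (∏ j, (qq j : ℝ)) * |M.det| := by
        rw [hdet, abs_mul, abs_of_nonneg (Finset.prod_nonneg fun j _ => by positivity)]
    _ ≤ (Q:ℝ)^(d+1) * ((d.factorial : ℝ) * (2*ρ)^d) := by
        apply mul_le_mul hprodle _ (abs_nonneg _) hQ0
        rw [hMdetU]; exact hUdet
    _ = (d.factorial : ℝ) * (2*ρ)^d * (Q:ℝ)^(d+1) := by ring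
  linarith

lemma isClosed_msupport {d : ℕ} (μ : Measure (EuclideanSpace ℝ (Fin d))) :
    IsClosed (msupport μ) := by
  rw [← isOpen_compl_iff, Metric.isOpen_iff]
  intro x hx
  simp only [msupport, Set.mem_compl_iff, Set.mem_setOf_eq, not_forall] at hx
  obtain ⟨r, hr, hμ⟩ := hx
  push_neg at hμ
  refine ⟨r/2, by linarith, fun y hy => ?_⟩
  simp only [Set.mem_compl_iff, msupport, Set.mem_setOf_eq, not_forall]
  refine ⟨r/2, by linarith, ?_⟩
  push_neg
  refine le_trans (measure_mono ?_) hμ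
  intro z hz
  rw [Metric.mem_ball] at *
  calc dist z x ≤ dist z y + dist y x := dist_triangle _ _ _
  _ < r/2 + r/2 := add_lt_add hz hy
  _ = r := by ring

lemma key_bound {d : ℕ}
    (μ : Measure (EuclideanSpace ℝ (Fin d))) [IsFiniteMeasure μ]
    {K : Set (EuclideanSpace ℝ (Fin d))} (hK : IsCompact K) (hKnull : μ Kᶜ = 0)
    (hsuppnull : μ (msupport μ)ᶜ = 0)
    (C₁ C₂ α : ℝ) (hC₁ : 0 < C₁) (hC₂ : 0 < C₂) (hα : 0 < α)
    (hdouble : ∀ x ∈ msupport μ, ∀ r : ℝ, 0 < r →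
      μ (Metric.closedBall x (2 * r)) ≤ ENNReal.ofReal C₁ * μ (Metric.closedBall x r))
    (hdecay : ∀ x ∈ msupport μ, ∀ W : AffineSubspace ℝ (EuclideanSpace ℝ (Fin d)),
      (W : Set (EuclideanSpace ℝ (Fin d))).Nonempty → W ≠ ⊤ → ∀ r ε : ℝ,
      0 < r → r ≤ 1 → 0 < ε →
      μ (affNbhd W (ε * r) ∩ Metric.closedBall x r) ≤
        ENNReal.ofReal (C₂ * ε ^ α) * μ (Metric.closedBall x r))
    (A : Set (EuclideanSpace ℝ (Fin d))) (Q : ℕ)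
    (r s ε : ℝ) (hr : 0 < r) (hr1 : r ≤ 1) (hs : 0 < s) (hε : 0 < ε) (hsεr : s ≤ ε * r)
    (hsmall : (d.factorial : ℝ) * (2*(r+s))^d * (Q:ℝ)^(d+1) < 1)
    (hA : ∀ y ∈ A, ∃ p : Fin d → ℤ, ∃ q : ℕ, 0 < q ∧ q < Q ∧
      dist y (WithLp.toLp 2 (fun i => (p i : ℝ) / q) : EuclideanSpace ℝ (Fin d)) ≤ s) :
    μ A ≤ ENNReal.ofReal (C₂ * ε ^ α * C₁^2) * μ Set.univ := by
  classical
  set X := K ∩ msupport μ with hX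
  have hXnull : μ Xᶜ = 0 := by
    rw [hX, Set.compl_inter]
    exact le_antisymm ((measure_union_le _ _).trans (by rw [hKnull, hsuppnull]; simp))
      zero_le
  have hXcpt : IsCompact X := hK.inter_right (isClosed_msupport μ)
  obtain ⟨M, hMX, hMfin, hMsep, hMcover⟩ := exists_net hXcpt hr
  have hμA : μ A ≤ ∑ x ∈ hMfin.toFinset, μ (A ∩ Metric.closedBall x r) := by
    calc μ A ≤ μ (A ∩ X) + μ Xᶜ := by
          refine (measure_mono ?_).trans (measure_union_le _ _)
          intro y hy
          by_cases hyX : y ∈ X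
          · exact Or.inl ⟨hy, hyX⟩
          · exact Or.inr hyX
    _ = μ (A ∩ X) := by rw [hXnull, add_zero]
    _ ≤ μ (⋃ x ∈ hMfin.toFinset, A ∩ Metric.closedBall x r) := by
          apply measure_mono
          intro y ⟨hyA, hyX⟩
          have := hMcover hyX
          simp only [Set.mem_iUnion] at this ⊢
          obtain ⟨x, hxM, hyx⟩ := this
          exact ⟨x, hMfin.mem_toFinset.mpr hxM, hyA, hyx⟩
    _ ≤ _ := measure_biUnion_finset_le _ _
  have hball : ∀ x ∈ M, μ (A ∩ Metric.closedBall x r) ≤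
      ENNReal.ofReal (C₂ * ε ^ α) * μ (Metric.closedBall x r) := by
    intro x hxM
    have hxsupp : x ∈ msupport μ := (hMX hxM).2
    rcases Set.eq_empty_or_nonempty (A ∩ Metric.closedBall x r) with hemp | ⟨y₀, hy₀A, hy₀B⟩
    · rw [hemp]; simp
    obtain ⟨p₀, q₀, hq₀, hq₀Q, hd₀⟩ := hA y₀ hy₀A
    set v₀ : EuclideanSpace ℝ (Fin d) := WithLp.toLp 2 (fun i => (p₀ i : ℝ) / q₀) with hv₀def
    set R := {v : EuclideanSpace ℝ (Fin d) |
      (∃ p : Fin d → ℤ, ∃ q : ℕ, 0 < q ∧ q < Q ∧ ∀ i, v i = (p i : ℝ) / q) ∧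
        v ∈ Metric.closedBall x (r+s)} with hRdef
    set W := affineSpan ℝ R with hW
    have hv₀R : v₀ ∈ R := by
      refine ⟨⟨p₀, q₀, hq₀, hq₀Q, fun i => rfl⟩, ?_⟩
      rw [Metric.mem_closedBall]
      calc dist v₀ x ≤ dist v₀ y₀ + dist y₀ x := dist_triangle _ _ _
      _ ≤ s + r := add_le_add (by rw [dist_comm]; exact hd₀) (Metric.mem_closedBall.mp hy₀B)
      _ = r + s := by ring
    have hWne : (W : Set (EuclideanSpace ℝ (Fin d))).Nonempty :=
      ⟨_, subset_affineSpan ℝ R hv₀R⟩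
    have hWtop : W ≠ ⊤ := rat_points_not_span Q x (r+s) (by linarith) hsmall
    have hsub : A ∩ Metric.closedBall x r ⊆ affNbhd W (ε * r) ∩ Metric.closedBall x r := by
      rintro y ⟨hyA, hyB⟩
      refine ⟨?_, hyB⟩
      obtain ⟨p, q, hq, hqQ, hdy⟩ := hA y hyA
      set v : EuclideanSpace ℝ (Fin d) := WithLp.toLp 2 (fun i => (p i : ℝ) / q) with hvdef
      have hvR : v ∈ R := by
        refine ⟨⟨p, q, hq, hqQ, fun i => rfl⟩, ?_⟩
        rw [Metric.mem_closedBall]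
        calc dist v x ≤ dist v y + dist y x := dist_triangle _ _ _
        _ ≤ s + r := add_le_add (by rw [dist_comm]; exact hdy) (Metric.mem_closedBall.mp hyB)
        _ = r + s := by ring
      have hvW : v ∈ (W : Set _) := subset_affineSpan ℝ R hvR
      show Metric.infDist y (W : Set _) ≤ ε * r
      calc Metric.infDist y (W : Set _) ≤ dist y v := Metric.infDist_le_dist_of_mem hvW
      _ ≤ s := hdy
      _ ≤ ε * r := hsεr
    calc μ (A ∩ Metric.closedBall x r) ≤ μ (affNbhd W (ε * r) ∩ Metric.closedBall x r) :=
          measure_mono hsub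
    _ ≤ ENNReal.ofReal (C₂ * ε ^ α) * μ (Metric.closedBall x r) :=
          hdecay x hxsupp W hWne hWtop r ε hr hr1 hε
  have hdouble2 : ∀ x ∈ M, μ (Metric.closedBall x r) ≤
      ENNReal.ofReal (C₁^2) * μ (Metric.closedBall x (r/4)) := by
    intro x hxM
    have hxsupp : x ∈ msupport μ := (hMX hxM).2
    have h1 : μ (Metric.closedBall x r) ≤ ENNReal.ofReal C₁ * μ (Metric.closedBall x (r/2)) := by
      have := hdouble x hxsupp (r/2) (by linarith)
      rwa [show 2 * (r/2) = r by ring] at this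
    have h2 : μ (Metric.closedBall x (r/2)) ≤
        ENNReal.ofReal C₁ * μ (Metric.closedBall x (r/4)) := by
      have := hdouble x hxsupp (r/4) (by linarith)
      rwa [show 2 * (r/4) = r/2 by ring] at this
    calc μ (Metric.closedBall x r) ≤ ENNReal.ofReal C₁ * μ (Metric.closedBall x (r/2)) := h1
    _ ≤ ENNReal.ofReal C₁ * (ENNReal.ofReal C₁ * μ (Metric.closedBall x (r/4))) :=
        mul_le_mul_right h2 _
    _ = ENNReal.ofReal (C₁^2) * μ (Metric.closedBall x (r/4)) := by
        rw [← mul_assoc, ← ENNReal.ofReal_mul hC₁.le, sq]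
  have hdisj : ∀ x ∈ M, ∀ y ∈ M, x ≠ y →
      Disjoint (Metric.closedBall x (r/4)) (Metric.closedBall y (r/4)) := by
    intro x hx y hy hxy
    apply Metric.closedBall_disjoint_closedBall
    have := hMsep hx hy hxy
    linarith
  have hsum : ∑ x ∈ hMfin.toFinset, μ (Metric.closedBall x (r/4)) ≤ μ Set.univ := by
    rw [← measure_biUnion_finset ?hd fun x _ => measurableSet_closedBall]
    · exact measure_mono (Set.subset_univ _)
    case hd =>
      intro x hx y hy hxy
      exact hdisj x (hMfin.mem_toFinset.mp hx) y (hMfin.mem_toFinset.mp hy) hxy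
  calc μ A ≤ ∑ x ∈ hMfin.toFinset, μ (A ∩ Metric.closedBall x r) := hμA
  _ ≤ ∑ x ∈ hMfin.toFinset, ENNReal.ofReal (C₂ * ε ^ α) *
        (ENNReal.ofReal (C₁^2) * μ (Metric.closedBall x (r/4))) := by
      apply Finset.sum_le_sum
      intro x hx
      exact (hball x (hMfin.mem_toFinset.mp hx)).trans
        (mul_le_mul_right (hdouble2 x (hMfin.mem_toFinset.mp hx)) _)
  _ = ENNReal.ofReal (C₂ * ε ^ α * C₁^2) *
        ∑ x ∈ hMfin.toFinset, μ (Metric.closedBall x (r/4)) := by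
      rw [Finset.mul_sum]
      apply Finset.sum_congr rfl
      intro x _
      rw [← mul_assoc, ← ENNReal.ofReal_mul (by positivity)]
  _ ≤ _ := mul_le_mul_right hsum _

lemma dist_le_sqrt_mul {d : ℕ} (y v : EuclideanSpace ℝ (Fin d)) (c : ℝ) (hc : 0 ≤ c)
    (h : ∀ i, |y i - v i| ≤ c) : dist y v ≤ Real.sqrt d * c := by
  rw [EuclideanSpace.dist_eq]
  have hsum : ∑ i, dist (y i) (v i)^2 ≤ (d:ℝ) * c^2 := by
    calc ∑ i, dist (y i) (v i)^2 ≤ ∑ _i : Fin d, c^2 := by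
          apply Finset.sum_le_sum
          intro i _
          rw [Real.dist_eq]
          exact pow_le_pow_left₀ (abs_nonneg _) (h i) 2
    _ = (d:ℝ) * c^2 := by simp [mul_comm]
  calc Real.sqrt (∑ i, dist (y i) (v i)^2) ≤ Real.sqrt ((d:ℝ) * c^2) := Real.sqrt_le_sqrt hsum
  _ = Real.sqrt d * c := by
      rw [Real.sqrt_mul (by positivity), Real.sqrt_sq hc]

lemma psi_anti {β : ℝ} (hβ : 0 < β) (a : ℝ) (ha : 0 < a) {m n : ℕ} (h2 : 2 ≤ m) (hmn : m ≤ n) :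
    (n:ℝ)^(-a) * Real.log n ^ (-β) ≤ (m:ℝ)^(-a) * Real.log m ^ (-β) := by
  have hm1 : (1:ℝ) < m := by exact_mod_cast lt_of_lt_of_le one_lt_two h2
  have hn1 : (1:ℝ) < n := lt_of_lt_of_le hm1 (by exact_mod_cast hmn)
  have hlm : 0 < Real.log m := Real.log_pos hm1
  have hln : 0 < Real.log n := Real.log_pos hn1
  apply mul_le_mul
  · rw [Real.rpow_neg (by positivity), Real.rpow_neg (by positivity)]
    apply inv_anti₀ (Real.rpow_pos_of_pos (by linarith) a)
    exact Real.rpow_le_rpow (by positivity) (by exact_mod_cast hmn) ha.le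
  · rw [Real.rpow_neg hln.le, Real.rpow_neg hlm.le]
    apply inv_anti₀ (Real.rpow_pos_of_pos hlm β)
    exact Real.rpow_le_rpow hlm.le (Real.log_le_log (by linarith) (by exact_mod_cast hmn)) hβ.le
  · positivity
  · positivity

lemma pairs_finite {d : ℕ} (x : EuclideanSpace ℝ (Fin d)) (N : ℕ) (c : ℝ) :
    {pq : (Fin d → ℤ) × ℕ | pq.2 < N ∧ 0 < pq.2 ∧
      ∀ i, |x i - (pq.1 i : ℝ) / (pq.2 : ℝ)| ≤ c}.Finite := by
  have hfinZ : ∀ B : ℝ, {m : ℤ | |(m:ℝ)| ≤ B}.Finite := by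
    intro B
    apply (Set.finite_Icc (-⌈B⌉) ⌈B⌉).subset
    intro m hm
    simp only [Set.mem_setOf_eq, abs_le] at hm
    constructor
    · have h1 : (-(⌈B⌉:ℝ)) ≤ (m:ℝ) := le_trans (neg_le_neg (Int.le_ceil B)) hm.1
      exact_mod_cast h1
    · exact_mod_cast hm.2.trans (Int.le_ceil B)
  apply Set.Finite.subset
    (Set.Finite.prod (Set.Finite.pi fun i => hfinZ ((N:ℝ) * (|x i| + c))) (Set.finite_Iio N))
  rintro ⟨p, q⟩ ⟨hqN, hq0, hbound⟩
  refine ⟨?_, hqN⟩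
  intro i _
  have h := hbound i
  have hq1 : (1:ℝ) ≤ q := by exact_mod_cast hq0
  have hqN' : (q:ℝ) ≤ N := by exact_mod_cast hqN.le
  have h1 : |(p i : ℝ)/q| ≤ |x i| + c := by
    calc |(p i:ℝ)/q| = |x i - (x i - (p i:ℝ)/q)| := by congr 1; ring
    _ ≤ |x i| + |x i - (p i:ℝ)/q| := abs_sub _ _
    _ ≤ |x i| + c := by linarith
  have h2 : |(p i : ℝ)| = (q:ℝ) * |(p i:ℝ)/q| := by
    rw [abs_div, abs_of_nonneg (by linarith : (0:ℝ) ≤ (q:ℝ))]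
    field_simp
  show |((p i:ℤ):ℝ)| ≤ (N:ℝ) * (|x i| + c)
  rw [h2]
  apply mul_le_mul hqN' h1 (abs_nonneg _) (by positivity)

/-- Corollary of Pollington–Velani: log-refined approximation. -/
theorem pollington_velani_log
    (d : ℕ) (hd : 0 < d)
    (μ : Measure (EuclideanSpace ℝ (Fin d))) [IsFiniteMeasure μ]
    (hcpt : ∃ K : Set (EuclideanSpace ℝ (Fin d)), IsCompact K ∧ μ Kᶜ = 0)
    (C₁ C₂ α : ℝ) (hC₁ : 0 < C₁) (hC₂ : 0 < C₂) (hα : 0 < α)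
    (hdouble : ∀ x ∈ msupport μ, ∀ r : ℝ, 0 < r →
      μ (Metric.closedBall x (2 * r)) ≤ ENNReal.ofReal C₁ * μ (Metric.closedBall x r))
    (hdecay : ∀ x ∈ msupport μ, ∀ W : AffineSubspace ℝ (EuclideanSpace ℝ (Fin d)),
      (W : Set (EuclideanSpace ℝ (Fin d))).Nonempty → W ≠ ⊤ → ∀ r ε : ℝ,
      0 < r → r ≤ 1 → 0 < ε →
      μ (affNbhd W (ε * r) ∩ Metric.closedBall x r) ≤
        ENNReal.ofReal (C₂ * ε ^ α) * μ (Metric.closedBall x r))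
    (β : ℝ) (hβ : 1 / α < β) :
    μ {x : EuclideanSpace ℝ (Fin d) |
        {pq : (Fin d → ℤ) × ℕ | 2 ≤ pq.2 ∧
          ∀ i, |x i - (pq.1 i : ℝ) / (pq.2 : ℝ)| ≤
            (pq.2 : ℝ) ^ (-(((d : ℝ) + 1) / d)) * Real.log pq.2 ^ (-β)}.Infinite} = 0 := by
  classical
  obtain ⟨K, hKcpt, hKnull⟩ := hcpt
  have hd' : (0:ℝ) < d := by exact_mod_cast hd
  have hβ0 : 0 < β := lt_trans (by positivity) hβ
  have hβα : 1 < β * α := by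
    rw [div_lt_iff₀ hα] at hβ
    linarith
  set a : ℝ := ((d:ℝ)+1)/d with ha
  have ha0 : 0 < a := by positivity
  set ψ : ℕ → ℝ := fun q => (q:ℝ)^(-a) * Real.log q ^ (-β) with hψdef
  set δ : ℝ := 1/(8 * d.factorial) with hδdef
  have hfact1 : (1:ℝ) ≤ d.factorial := by exact_mod_cast d.factorial_pos
  have hδ0 : 0 < δ := by rw [hδdef]; positivity
  have hδ1 : δ ≤ 1 := by
    rw [hδdef, div_le_one (by positivity)]
    linarith
  have hsd : (0:ℝ) < Real.sqrt d := Real.sqrt_pos.mpr hd'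
  set r : ℕ → ℝ := fun t => δ * ((2:ℝ)^(t+1))^(-a) with hrdef
  set s : ℕ → ℝ := fun t => Real.sqrt d * ψ (2^t) with hsdef
  set c₅ : ℝ := (Real.sqrt d * (2:ℝ)^a / δ) * Real.log 2 ^ (-β) with hc₅def
  have hlog2 : 0 < Real.log 2 := Real.log_pos one_lt_two
  have hc₅0 : 0 < c₅ := by
    rw [hc₅def]
    have h2a : (0:ℝ) < (2:ℝ)^a := Real.rpow_pos_of_pos two_pos a
    have : (0:ℝ) < Real.log 2 ^ (-β) := Real.rpow_pos_of_pos hlog2 _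
    positivity
  set ε : ℕ → ℝ := fun t => c₅ * (t:ℝ)^(-β) with hεdef
  set A : ℕ → Set (EuclideanSpace ℝ (Fin d)) := fun t =>
    {x | ∃ p : Fin d → ℤ, ∃ q : ℕ, 2^t ≤ q ∧ q < 2^(t+1) ∧
      ∀ i, |x i - (p i:ℝ)/(q:ℝ)| ≤ ψ (2^t)} with hAdef
  -- basic positivity for t ≥ 1
  have hψpos : ∀ t : ℕ, 1 ≤ t → 0 < ψ (2^t) := by
    intro t ht
    simp only [hψdef]
    have h1 : ((2^t : ℕ):ℝ) = (2:ℝ)^t := by push_cast; ring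
    rw [h1]
    have h2 : (1:ℝ) < (2:ℝ)^t := by
      calc (1:ℝ) < 2 := one_lt_two
      _ = (2:ℝ)^1 := (pow_one 2).symm
      _ ≤ (2:ℝ)^t := pow_le_pow_right₀ one_le_two ht
    have := Real.log_pos h2
    have h3 : (0:ℝ) < (2:ℝ)^t := by positivity
    exact mul_pos (Real.rpow_pos_of_pos h3 _) (Real.rpow_pos_of_pos this _)
  have hrpos : ∀ t : ℕ, 0 < r t := by
    intro t
    exact mul_pos hδ0 (Real.rpow_pos_of_pos (by positivity) _)
  have h2pow1 : ∀ t : ℕ, (1:ℝ) ≤ (2:ℝ)^t := fun t => one_le_pow₀ one_le_two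
  have hr1 : ∀ t : ℕ, r t ≤ 1 := by
    intro t
    simp only [hrdef]
    have hx : ((2:ℝ)^(t+1))^(-a) ≤ 1 :=
      Real.rpow_le_one_of_one_le_of_nonpos (h2pow1 (t+1)) (by linarith)
    have hxpos : 0 < ((2:ℝ)^(t+1))^(-a) := Real.rpow_pos_of_pos (by positivity) _
    nlinarith
  have hspos : ∀ t : ℕ, 1 ≤ t → 0 < s t := fun t ht => mul_pos hsd (hψpos t ht)
  have hεpos : ∀ t : ℕ, 1 ≤ t → 0 < ε t := by
    intro t ht
    have : (0:ℝ) < (t:ℝ) := by exact_mod_cast ht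
    exact mul_pos hc₅0 (Real.rpow_pos_of_pos this _)
  -- structural formulas for s and r
  have hs_eq : ∀ t : ℕ, s t = Real.sqrt d *
      (((2:ℝ)^t)^(-a) * ((t:ℝ)^(-β) * Real.log 2 ^ (-β))) := by
    intro t
    have hc : ((2^t : ℕ):ℝ) = (2:ℝ)^t := by push_cast; ring
    have h4 : ((t:ℝ) * Real.log 2)^(-β) = (t:ℝ)^(-β) * Real.log 2 ^ (-β) :=
      Real.mul_rpow (by positivity) hlog2.le
    simp only [hsdef, hψdef, hc, Real.log_pow, h4]
  have hr_eq : ∀ t : ℕ, r t = δ * (((2:ℝ)^t)^(-a) * (2:ℝ)^(-a)) := by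
    intro t
    simp only [hrdef]
    rw [pow_succ, Real.mul_rpow (by positivity) (by norm_num)]
  have h3 : (2:ℝ)^a * (2:ℝ)^(-a) = 1 := by
    rw [← Real.rpow_add two_pos]; simp
  -- key identity : s t = ε t * r t
  have hkey : ∀ t : ℕ, s t = ε t * r t := by
    intro t
    have hδne : δ ≠ 0 := hδ0.ne'
    have e1 : ε t * r t = (Real.sqrt d *
        (((2:ℝ)^t)^(-a) * ((t:ℝ)^(-β) * Real.log 2 ^ (-β)))) * ((2:ℝ)^a * (2:ℝ)^(-a)) := by
      simp only [hεdef, hc₅def, hr_eq t]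
      field_simp
    rw [e1, h3, mul_one, hs_eq t]
  -- eventually s t ≤ r t
  have hpos3 : 0 < δ * (2:ℝ)^(-a) / Real.sqrt d := by
    have : (0:ℝ) < (2:ℝ)^(-a) := Real.rpow_pos_of_pos two_pos _
    positivity
  have htend : Tendsto (fun t : ℕ => (t:ℝ)^(-β) * Real.log 2 ^ (-β)) atTop (𝓝 0) := by
    have h2 : Tendsto (fun y : ℝ => y^(-β)) atTop (𝓝 0) := tendsto_rpow_neg_atTop hβ0
    have h1 : Tendsto (fun t : ℕ => (t:ℝ)) atTop atTop := tendsto_natCast_atTop_atTop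
    have := (h2.comp h1).mul_const (Real.log 2 ^ (-β))
    simpa using this
  have hev : ∀ᶠ t : ℕ in atTop, s t ≤ r t := by
    filter_upwards [htend.eventually (gt_mem_nhds hpos3)] with t ht
    have hX : (0:ℝ) < ((2:ℝ)^t)^(-a) := Real.rpow_pos_of_pos (by positivity) _
    rw [hs_eq t, hr_eq t]
    have h5 : Real.sqrt d * ((t:ℝ)^(-β) * Real.log 2 ^ (-β)) ≤ δ * (2:ℝ)^(-a) := by
      rw [lt_div_iff₀ hsd] at ht
      nlinarith
    calc Real.sqrt d * (((2:ℝ)^t)^(-a) * ((t:ℝ)^(-β) * Real.log 2 ^ (-β)))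
        = (Real.sqrt d * ((t:ℝ)^(-β) * Real.log 2 ^ (-β))) * ((2:ℝ)^t)^(-a) := by ring
    _ ≤ (δ * (2:ℝ)^(-a)) * ((2:ℝ)^t)^(-a) := mul_le_mul_of_nonneg_right h5 hX.le
    _ = δ * (((2:ℝ)^t)^(-a) * (2:ℝ)^(-a)) := by ring
  obtain ⟨T₀, hT₀⟩ := eventually_atTop.mp hev
  -- nonnegativity of s
  have hsnn : ∀ t : ℕ, 0 ≤ s t := by
    intro t
    rw [hs_eq t]
    have h1 : (0:ℝ) ≤ ((2:ℝ)^t)^(-a) := (Real.rpow_pos_of_pos (by positivity) _).le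
    have h2 : (0:ℝ) ≤ (t:ℝ)^(-β) := Real.rpow_nonneg (by positivity) _
    have h3' : (0:ℝ) ≤ Real.log 2 ^ (-β) := Real.rpow_nonneg hlog2.le _
    positivity
  -- the smallness condition
  have hsmall : ∀ t : ℕ, s t ≤ r t →
      (d.factorial : ℝ) * (2*(r t + s t))^d * ((2^(t+1) : ℕ):ℝ)^(d+1) < 1 := by
    intro t hst
    have hc : ((2^(t+1) : ℕ):ℝ) = (2:ℝ)^(t+1) := by push_cast; ring
    rw [hc]
    have hx0 : (0:ℝ) < (2:ℝ)^(t+1) := by positivity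
    have hXB : (((2:ℝ)^(t+1))^(-a))^d * ((2:ℝ)^(t+1))^(d+1) = 1 := by
      rw [← Real.rpow_natCast (((2:ℝ)^(t+1))^(-a)) d, ← Real.rpow_mul hx0.le,
        ← Real.rpow_natCast ((2:ℝ)^(t+1)) (d+1), ← Real.rpow_add hx0]
      have had : a * (d:ℝ) = (d:ℝ)+1 := by
        rw [ha]; field_simp
      have hexp : -a * (d:ℝ) + ((d:ℕ)+1 : ℕ) = 0 := by
        push_cast
        linarith
      rw [hexp, Real.rpow_zero]
    have h2r : 2*(r t + s t) ≤ 4 * r t := by nlinarith [hrpos t]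
    have h2rnn : (0:ℝ) ≤ 2*(r t + s t) := by nlinarith [hrpos t, hsnn t]
    have h4r : ((4:ℝ) * r t)^d = (4*δ)^d * (((2:ℝ)^(t+1))^(-a))^d := by
      simp only [hrdef]
      rw [← mul_pow]
      ring_nf
    have hfactnn : (0:ℝ) ≤ d.factorial := by positivity
    calc (d.factorial : ℝ) * (2*(r t + s t))^d * ((2:ℝ)^(t+1))^(d+1)
        ≤ (d.factorial : ℝ) * ((4:ℝ) * r t)^d * ((2:ℝ)^(t+1))^(d+1) := by
          apply mul_le_mul_of_nonneg_right _ (by positivity)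
          exact mul_le_mul_of_nonneg_left (pow_le_pow_left₀ h2rnn h2r d) hfactnn
    _ = (d.factorial : ℝ) * (4*δ)^d * ((((2:ℝ)^(t+1))^(-a))^d * ((2:ℝ)^(t+1))^(d+1)) := by
          rw [h4r]; ring
    _ = (d.factorial : ℝ) * (4*δ)^d := by rw [hXB, mul_one]
    _ < 1 := by
          have h4δ : 4*δ = (2*(d.factorial:ℝ))⁻¹ := by
            simp only [hδdef]
            field_simp
            ring
          rw [h4δ]
          have hzpos : (0:ℝ) < (2*(d.factorial:ℝ))⁻¹ := by positivity
          have hz1 : (2*(d.factorial:ℝ))⁻¹ ≤ 1 := by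
            rw [inv_le_one_iff₀]
            right; linarith
          have h1 : ((2*(d.factorial:ℝ))⁻¹)^d ≤ (2*(d.factorial:ℝ))⁻¹ := by
            calc ((2*(d.factorial:ℝ))⁻¹)^d ≤ ((2*(d.factorial:ℝ))⁻¹)^1 :=
                  pow_le_pow_of_le_one hzpos.le hz1 hd
            _ = _ := pow_one _
          have h2 : (d.factorial:ℝ) * (2*(d.factorial:ℝ))⁻¹ = 1/2 := by
            field_simp
          calc (d.factorial : ℝ) * ((2*(d.factorial:ℝ))⁻¹)^d
              ≤ (d.factorial:ℝ) * (2*(d.factorial:ℝ))⁻¹ :=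
                mul_le_mul_of_nonneg_left h1 hfactnn
          _ = 1/2 := h2
          _ < 1 := by norm_num
  -- the per-scale measure bound
  have hbound : ∀ t : ℕ, 1 ≤ t → s t ≤ r t →
      μ (A t) ≤ ENNReal.ofReal (C₂ * (ε t)^α * C₁^2) * μ Set.univ := by
    intro t ht hst
    apply key_bound μ hKcpt hKnull (msupport_compl_null μ) C₁ C₂ α hC₁ hC₂ hα hdouble hdecay
      (A t) (2^(t+1)) (r t) (s t) (ε t) (hrpos t) (hr1 t) (hspos t ht) (hεpos t ht)
      (le_of_eq (hkey t)) (hsmall t hst)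
    intro y hy
    obtain ⟨p, q, hq1, hq2, hq3⟩ := hy
    have hq0 : 0 < q := lt_of_lt_of_le (Nat.two_pow_pos t) hq1
    refine ⟨p, q, hq0, hq2, ?_⟩
    have := dist_le_sqrt_mul y (WithLp.toLp 2 (fun i => (p i : ℝ) / q)) (ψ (2^t)) (hψpos t ht).le
      (fun i => hq3 i)
    simpa [hsdef] using this
  -- summability
  have hεα : ∀ t : ℕ, (ε t)^α = c₅^α * (t:ℝ)^(-β*α) := by
    intro t
    simp only [hεdef]
    rw [Real.mul_rpow hc₅0.le (Real.rpow_nonneg (by positivity) _), ← Real.rpow_mul (by positivity)]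
  have hsummable : Summable (fun t : ℕ => C₂ * (c₅^α * (t:ℝ)^(-β*α)) * C₁^2) := by
    apply Summable.mul_right
    apply Summable.mul_left
    apply Summable.mul_left
    rw [Real.summable_nat_rpow]
    linarith
  set g : ℕ → ENNReal := fun t => ENNReal.ofReal (C₂ * (ε t)^α * C₁^2) * μ Set.univ with hgdef
  have hgsum : ∑' t, g t ≠ ⊤ := by
    have h1 : ∑' t, g t = (∑' t, ENNReal.ofReal (C₂ * (ε t)^α * C₁^2)) * μ Set.univ :=
      ENNReal.tsum_mul_right
    rw [h1]
    apply ENNReal.mul_ne_top _ (measure_ne_top μ _)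
    have h2 : (∑' t, ENNReal.ofReal (C₂ * (ε t)^α * C₁^2)) =
        ∑' t : ℕ, ENNReal.ofReal (C₂ * (c₅^α * (t:ℝ)^(-β*α)) * C₁^2) :=
      tsum_congr fun t => by rw [hεα t]
    have hnn : ∀ t : ℕ, 0 ≤ C₂ * (c₅^α * (t:ℝ)^(-β*α)) * C₁^2 := by
      intro t
      have hc₅α : (0:ℝ) ≤ c₅^α := Real.rpow_nonneg hc₅0.le _
      have htβ : (0:ℝ) ≤ (t:ℝ)^(-β*α) := Real.rpow_nonneg (by positivity) _
      positivity
    have h3 : (∑' t : ℕ, ENNReal.ofReal (C₂ * (c₅^α * (t:ℝ)^(-β*α)) * C₁^2)) =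
        ENNReal.ofReal (∑' t : ℕ, C₂ * (c₅^α * (t:ℝ)^(-β*α)) * C₁^2) :=
      (ENNReal.ofReal_tsum_of_nonneg hnn hsummable).symm
    rw [h2, h3]
    exact ENNReal.ofReal_ne_top
  -- conclusion via tail sums
  refine le_antisymm ?_ zero_le
  have hincl : ∀ T : ℕ, T₀ ≤ T → 1 ≤ T →
      {x : EuclideanSpace ℝ (Fin d) |
        {pq : (Fin d → ℤ) × ℕ | 2 ≤ pq.2 ∧
          ∀ i, |x i - (pq.1 i : ℝ) / (pq.2 : ℝ)| ≤
            (pq.2 : ℝ) ^ (-(((d : ℝ) + 1) / d)) * Real.log pq.2 ^ (-β)}.Infinite}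
        ⊆ ⋃ k : ℕ, A (k + T) := by
    intro T hTT₀ hT1 x hx
    rw [Set.mem_setOf_eq] at hx
    have hlarge : ∃ pq : (Fin d → ℤ) × ℕ, (2 ≤ pq.2 ∧
        ∀ i, |x i - (pq.1 i : ℝ) / (pq.2 : ℝ)| ≤
          (pq.2 : ℝ) ^ (-(((d : ℝ) + 1) / d)) * Real.log pq.2 ^ (-β)) ∧ 2^T ≤ pq.2 := by
      by_contra hno
      push_neg at hno
      apply hx
      apply (pairs_finite x (2^T) (ψ 2)).subset
      rintro ⟨p, q⟩ hpq
      obtain ⟨hq2, hqb⟩ := hpq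
      refine ⟨hno (p, q) ⟨hq2, hqb⟩, by omega, fun i => le_trans (hqb i) ?_⟩
      exact psi_anti hβ0 a ha0 le_rfl hq2
    obtain ⟨⟨p, q⟩, ⟨hq2, hqb⟩, hqT⟩ := hlarge
    have hq0 : q ≠ 0 := by omega
    have h2t : 2^(Nat.log 2 q) ≤ q := Nat.pow_log_le_self 2 hq0
    have h2t' : q < 2^(Nat.log 2 q + 1) := Nat.lt_pow_succ_log_self one_lt_two q
    have hTt : T ≤ Nat.log 2 q := by
      have h := Nat.log_mono_right (b := 2) hqT
      rwa [Nat.log_pow one_lt_two] at h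
    have ht1 : 1 ≤ Nat.log 2 q := le_trans hT1 hTt
    refine Set.mem_iUnion.mpr ⟨Nat.log 2 q - T, ?_⟩
    have hTsub : Nat.log 2 q - T + T = Nat.log 2 q := Nat.sub_add_cancel hTt
    rw [hTsub]
    refine ⟨p, q, h2t, h2t', fun i => le_trans (hqb i) ?_⟩
    have h2le : 2 ≤ 2^(Nat.log 2 q) := by
      calc 2 = 2^1 := (pow_one 2).symm
      _ ≤ 2^(Nat.log 2 q) := Nat.pow_le_pow_right (by norm_num) ht1
    exact psi_anti hβ0 a ha0 h2le h2t
  have hfin : ∀ T : ℕ, T₀ ≤ T → 1 ≤ T →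
      μ {x : EuclideanSpace ℝ (Fin d) |
        {pq : (Fin d → ℤ) × ℕ | 2 ≤ pq.2 ∧
          ∀ i, |x i - (pq.1 i : ℝ) / (pq.2 : ℝ)| ≤
            (pq.2 : ℝ) ^ (-(((d : ℝ) + 1) / d)) * Real.log pq.2 ^ (-β)}.Infinite}
        ≤ ∑' k, g (k + T) := by
    intro T h1 h2
    calc μ _ ≤ μ (⋃ k : ℕ, A (k + T)) := measure_mono (hincl T h1 h2)
    _ ≤ ∑' k, μ (A (k + T)) := measure_iUnion_le _
    _ ≤ ∑' k, g (k + T) := by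
        apply ENNReal.tsum_le_tsum
        intro k
        exact hbound (k + T) (by omega) (hT₀ (k + T) (by omega))
  have htail := ENNReal.tendsto_sum_nat_add g hgsum
  have hevT : ∀ᶠ T : ℕ in atTop, μ {x : EuclideanSpace ℝ (Fin d) |
        {pq : (Fin d → ℤ) × ℕ | 2 ≤ pq.2 ∧
          ∀ i, |x i - (pq.1 i : ℝ) / (pq.2 : ℝ)| ≤
            (pq.2 : ℝ) ^ (-(((d : ℝ) + 1) / d)) * Real.log pq.2 ^ (-β)}.Infinite}
        ≤ ∑' k, g (k + T) := by
    filter_upwards [eventually_ge_atTop T₀, eventually_ge_atTop 1] with T hT hT1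
    exact hfin T hT hT1
  exact ge_of_tendsto htail hevT
end
end

section
/- Let Φ = {φ_a}_{a∈A} be a self-similar IFS on ℝ^d with attractor X and coding map Π. Let {A_b}_{b∈A} be a family of subsets of A and for each b ∈ A let ν_b be a probability measure on A with ν_b({a}) > 0 for a ∈ A_b and ν_b({a}) = 0 for a ∉ A_b. Suppose there exists ε₀ > 0 such that for every b ∈ A and every proper affine subspace W ⊊ ℝ^d there is a ∈ A_b with φ_a(X) ∩ W^{(ε₀)} = ∅. For ω = (b_n)_{n≥1} ∈ A^ℕ let μ_ω be the pushforward under Π of the infinite product measure on A^ℕ whose n-th factor is ν_{b_n}. Then there exist C, α > 0 such that for every ω ∈ A^ℕ, every proper affine subspace W ⊊ ℝ^d and every ε > 0, μ_ω(W^{(ε)}) ≤ C ε^α. -/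
noncomputable section
open MeasureTheory Metric Filter Topology

variable {E : Type*} [NormedAddCommGroup E] [NormedSpace ℝ E]

open scoped RealInnerProductSpace in
private lemma similarity_affineEquiv {E' : Type*} [NormedAddCommGroup E']
    [InnerProductSpace ℝ E'] [FiniteDimensional ℝ E']
    {f : E' → E'} {r : ℝ} (hr : 0 < r)
    (hf : ∀ x y, ‖f x - f y‖ = r * ‖x - y‖) :
    ∃ F : E' ≃ᵃ[ℝ] E', ⇑F = f := by
  set g : E' → E' := fun x => r⁻¹ • (f x - f 0) with hg
  have hgd : ∀ x y, g x - g y = r⁻¹ • (f x - f y) := by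
    intro x y
    rw [hg]
    simp only [← smul_sub]
    congr 1
    abel
  have hnormd : ∀ x y, ‖g x - g y‖ = ‖x - y‖ := by
    intro x y
    rw [hgd, norm_smul, hf, Real.norm_eq_abs, abs_of_pos (inv_pos.mpr hr),
      inv_mul_cancel_left₀ hr.ne']
  have hg0 : g 0 = 0 := by simp [hg]
  have hnorm1 : ∀ x, ‖g x‖ = ‖x‖ := by
    intro x
    have := hnormd x 0
    rwa [hg0, sub_zero, sub_zero] at this
  have hinner : ∀ x y, ⟪g x, g y⟫ = ⟪x, y⟫ := by
    intro x y
    have h1 := norm_sub_sq_real (g x) (g y)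
    rw [hnormd x y, hnorm1 x, hnorm1 y] at h1
    have h2 := norm_sub_sq_real x y
    linarith
  have hadd : ∀ x y, g (x + y) = g x + g y := by
    intro x y
    have e1 := norm_sub_sq_real (g (x + y)) (g x + g y)
    have e2 := norm_add_sq_real (g x) (g y)
    have e3 : ⟪g (x + y), g x + g y⟫ = ⟪x + y, x⟫ + ⟪x + y, y⟫ := by
      rw [inner_add_right, hinner, hinner]
    have e4 : ⟪x + y, x⟫ + ⟪x + y, y⟫ = ‖x + y‖ ^ 2 := by
      rw [← inner_add_right, real_inner_self_eq_norm_sq]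
    have e5 : ‖g (x + y)‖ = ‖x + y‖ := hnorm1 _
    have e6 : ‖g x‖ = ‖x‖ := hnorm1 x
    have e7 : ‖g y‖ = ‖y‖ := hnorm1 y
    have e8 : ⟪g x, g y⟫ = ⟪x, y⟫ := hinner x y
    have e9 := norm_add_sq_real x y
    have key : ‖g (x + y) - (g x + g y)‖ ^ 2 = 0 := by
      rw [e1, e3, e4, e5, e2, e6, e7, e8]
      nlinarith [e9]
    have := pow_eq_zero_iff (n := 2) (by norm_num) |>.mp key
    rw [norm_eq_zero, sub_eq_zero] at this
    exact this
  have hsmul : ∀ (c : ℝ) (x : E'), g (c • x) = c • g x := by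
    intro c x
    have e1 := norm_sub_sq_real (g (c • x)) (c • g x)
    have e2 : ⟪g (c • x), c • g x⟫ = c * (c * ⟪x, x⟫) := by
      rw [real_inner_smul_right, hinner, real_inner_smul_left]
    have e3 : ‖c • g x‖ ^ 2 = c ^ 2 * ‖x‖ ^ 2 := by
      rw [norm_smul, Real.norm_eq_abs, mul_pow, sq_abs, hnorm1]
    have e4 : ‖g (c • x)‖ ^ 2 = c ^ 2 * ‖x‖ ^ 2 := by
      rw [hnorm1, norm_smul, Real.norm_eq_abs, mul_pow, sq_abs]
    have e5 : ⟪x, x⟫ = ‖x‖ ^ 2 := real_inner_self_eq_norm_sq x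
    have key : ‖g (c • x) - c • g x‖ ^ 2 = 0 := by
      rw [e1, e2, e3, e4, e5]
      ring
    have := pow_eq_zero_iff (n := 2) (by norm_num) |>.mp key
    rw [norm_eq_zero, sub_eq_zero] at this
    exact this
  let lin : E' →ₗ[ℝ] E' :=
    { toFun := g
      map_add' := hadd
      map_smul' := hsmul }
  have hinj : Function.Injective lin := by
    intro x y hxy
    have : ‖x - y‖ = 0 := by
      rw [← hnormd x y]
      show ‖lin x - lin y‖ = 0
      rw [hxy, sub_self, norm_zero]
    rwa [norm_eq_zero, sub_eq_zero] at this
  let leq : E' ≃ₗ[ℝ] E' :=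
    LinearEquiv.ofBijective lin ⟨hinj, LinearMap.injective_iff_surjective.mp hinj⟩
  let se : E' ≃ₗ[ℝ] E' := LinearEquiv.smulOfNeZero ℝ E' r hr.ne'
  refine ⟨((leq.trans se).toAffineEquiv).trans (AffineEquiv.constVAdd ℝ E' (f 0)), ?_⟩
  funext x
  show f 0 +ᵥ (r • g x) = f x
  have : r • g x = f x - f 0 := by
    rw [hg]
    exact smul_inv_smul₀ hr.ne' _
  rw [this]
  simp [vadd_eq_add]

open scoped ENNReal

private noncomputable def badSum {A V : Type*} [Fintype A] [DecidableEq A]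
    (p : A → A → ℝ≥0∞) (G : A → V → A) (cmap : A → V → V) :
    ℕ → (ℕ → A) → V → ℝ≥0∞
  | 0, _, _ => 1
  | n + 1, ω, v => ∑ a : A, if a = G (ω 0) v then 0
      else p (ω 0) a * badSum p G cmap n (fun k => ω (k + 1)) (cmap a v)

private def Allowed {A V : Type*} (G : A → V → A) (cmap : A → V → V) :
    (n : ℕ) → (ℕ → A) → V → (Fin n → A) → Prop
  | 0, _, _, _ => True
  | n + 1, ω, v, w => w 0 ≠ G (ω 0) v ∧
      Allowed G cmap n (fun k => ω (k + 1)) (cmap (w 0) v) (fun j => w j.succ)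

private theorem badSum_le {A V : Type*} [Fintype A] [DecidableEq A]
    (p : A → A → ℝ≥0∞) (G : A → V → A) (cmap : A → V → V)
    (Pred : V → Prop) (hPred : ∀ a v, Pred v → Pred (cmap a v))
    (δ : ℝ≥0∞) (hδ : δ ≠ ⊤) (hsum : ∀ b, ∑ a : A, p b a ≤ 1)
    (hG : ∀ b v, Pred v → δ ≤ p b (G b v)) :
    ∀ n (ω : ℕ → A) (v : V), Pred v → badSum p G cmap n ω v ≤ (1 - δ) ^ n := by
  intro n
  induction n with
  | zero => intro ω v _; simp [badSum]
  | succ n IH =>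
    intro ω v hv
    have key : ∑ a : A, (if a = G (ω 0) v then 0 else p (ω 0) a) ≤ 1 - δ := by
      have e1 : ∑ a : A, (if a = G (ω 0) v then 0 else p (ω 0) a)
          = ∑ a ∈ Finset.univ.erase (G (ω 0) v), p (ω 0) a := by
        rw [← Finset.add_sum_erase _ (fun a => if a = G (ω 0) v then 0 else p (ω 0) a)
          (Finset.mem_univ (G (ω 0) v))]
        rw [if_pos rfl, zero_add]
        exact Finset.sum_congr rfl fun a ha => if_neg (Finset.ne_of_mem_erase ha)
      have h1 : (∑ a : A, (if a = G (ω 0) v then 0 else p (ω 0) a)) + δ ≤ 1 := by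
        rw [e1]
        calc (∑ a ∈ Finset.univ.erase (G (ω 0) v), p (ω 0) a) + δ
            ≤ (∑ a ∈ Finset.univ.erase (G (ω 0) v), p (ω 0) a) + p (ω 0) (G (ω 0) v) :=
              add_le_add_right (hG _ _ hv) _
          _ = ∑ a : A, p (ω 0) a := by
              rw [add_comm, Finset.add_sum_erase _ _ (Finset.mem_univ _)]
          _ ≤ 1 := hsum _
      exact (ENNReal.cancel_of_ne hδ).le_tsub_of_add_le_right h1
    calc badSum p G cmap (n + 1) ω v
        = ∑ a : A, (if a = G (ω 0) v then 0
            else p (ω 0) a * badSum p G cmap n (fun k => ω (k + 1)) (cmap a v)) := by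
          rw [badSum]
      _ ≤ ∑ a : A, (if a = G (ω 0) v then 0 else p (ω 0) a) * (1 - δ) ^ n := by
          apply Finset.sum_le_sum
          intro a _
          by_cases h : a = G (ω 0) v
          · simp [h]
          · rw [if_neg h, if_neg h]
            exact mul_le_mul_right (IH _ _ (hPred a v hv)) _
      _ = (∑ a : A, (if a = G (ω 0) v then 0 else p (ω 0) a)) * (1 - δ) ^ n :=
          (Finset.sum_mul _ _ _).symm
      _ ≤ (1 - δ) * (1 - δ) ^ n := mul_le_mul_left key _
      _ = (1 - δ) ^ (n + 1) := (pow_succ' _ _).symm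

open scoped Classical in
private theorem sum_allowed_le {A V : Type*} [Fintype A] [DecidableEq A]
    (p : A → A → ℝ≥0∞) (G : A → V → A) (cmap : A → V → V) :
    ∀ n (ω : ℕ → A) (v : V),
      (∑ w : Fin n → A, if Allowed G cmap n ω v w then ∏ j : Fin n, p (ω j) (w j) else 0)
        ≤ badSum p G cmap n ω v := by
  intro n
  induction n with
  | zero =>
    intro ω v
    simp [badSum, Allowed]
  | succ n IH =>
    intro ω v
    have hsplit : ∀ x : A × (Fin n → A),
        (if x.1 = G (ω 0) v then 0 else p (ω 0) x.1 *
          (if Allowed G cmap n (fun k => ω (k + 1)) (cmap x.1 v) x.2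
            then ∏ j : Fin n, p (ω (j.succ)) (x.2 j) else 0))
        = (if Allowed G cmap (n + 1) ω v ((Fin.consEquiv (fun _ : Fin (n + 1) => A)) x)
            then ∏ j : Fin (n + 1), p (ω j) (((Fin.consEquiv (fun _ : Fin (n + 1) => A)) x) j)
            else 0) := by
      rintro ⟨a, w⟩
      have hc : (Fin.consEquiv (fun _ : Fin (n + 1) => A)) (a, w) = Fin.cons a w := rfl
      rw [hc]
      have hall : Allowed G cmap (n + 1) ω v (Fin.cons a w) ↔
          (a ≠ G (ω 0) v ∧ Allowed G cmap n (fun k => ω (k + 1)) (cmap a v) w) := by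
        rw [Allowed]
        simp [Fin.cons_zero, Fin.cons_succ]
      by_cases h1 : a = G (ω 0) v
      · rw [if_pos h1, if_neg (by rw [hall]; rintro ⟨h, -⟩; exact h h1)]
      · rw [if_neg h1]
        by_cases h2 : Allowed G cmap n (fun k => ω (k + 1)) (cmap a v) w
        · rw [if_pos h2, if_pos (hall.mpr ⟨h1, h2⟩), Fin.prod_univ_succ]
          simp [Fin.cons_zero, Fin.cons_succ]
        · rw [if_neg h2, mul_zero, if_neg (by rw [hall]; rintro ⟨-, h⟩; exact h2 h)]
    calc (∑ w : Fin (n + 1) → A,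
            if Allowed G cmap (n + 1) ω v w then ∏ j : Fin (n + 1), p (ω j) (w j) else 0)
        = ∑ x : A × (Fin n → A),
            (if x.1 = G (ω 0) v then 0 else p (ω 0) x.1 *
              (if Allowed G cmap n (fun k => ω (k + 1)) (cmap x.1 v) x.2
                then ∏ j : Fin n, p (ω (j.succ)) (x.2 j) else 0)) :=
          (Fintype.sum_equiv (Fin.consEquiv (fun _ : Fin (n + 1) => A)) _ _ hsplit).symm
      _ = ∑ a : A, ∑ w' : Fin n → A,
            (if a = G (ω 0) v then 0 else p (ω 0) a *
              (if Allowed G cmap n (fun k => ω (k + 1)) (cmap a v) w'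
                then ∏ j : Fin n, p (ω (j.succ)) (w' j) else 0)) :=
          Fintype.sum_prod_type _
      _ ≤ ∑ a : A, (if a = G (ω 0) v then 0
            else p (ω 0) a * badSum p G cmap n (fun k => ω (k + 1)) (cmap a v)) := by
          apply Finset.sum_le_sum
          intro a _
          by_cases h : a = G (ω 0) v
          · simp [h]
          · simp only [if_neg h]
            rw [← Finset.mul_sum]
            exact mul_le_mul_right (IH (fun k => ω (k + 1)) (cmap a v)) _
      _ = badSum p G cmap (n + 1) ω v := by rw [badSum]

/-- Proposition: uniform polynomial decay near affine subspaces for the measures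
`μ_ω` (pushforwards of infinite product measures under the coding map). -/
theorem planar_decay
    (d : ℕ) {A : Type*} [Fintype A] [MeasurableSpace A] [MeasurableSingletonClass A]
    (φ : A → EuclideanSpace ℝ (Fin d) → EuclideanSpace ℝ (Fin d))
    (hΦ : IsSelfSimilarIFS φ)
    (X : Set (EuclideanSpace ℝ (Fin d))) (hXne : X.Nonempty) (hXc : IsCompact X)
    (hXinv : X = ⋃ a, φ a '' X)
    (codingMap : (ℕ → A) → EuclideanSpace ℝ (Fin d))
    (hCoding : ∀ (a : ℕ → A) (x₀ : EuclideanSpace ℝ (Fin d)),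
      Filter.Tendsto (fun n => wordMap φ n a x₀) Filter.atTop (nhds (codingMap a)))
    (Ab : A → Set A)
    (ν : A → Measure A) [∀ b, IsProbabilityMeasure (ν b)]
    (hνpos : ∀ b : A, ∀ a ∈ Ab b, 0 < ν b {a})
    (hνzero : ∀ b : A, ∀ a ∉ Ab b, ν b {a} = 0)
    (ε₀ : ℝ) (hε₀ : 0 < ε₀)
    (hsep : ∀ b : A, ∀ W : AffineSubspace ℝ (EuclideanSpace ℝ (Fin d)),
      (W : Set (EuclideanSpace ℝ (Fin d))).Nonempty → W ≠ ⊤ →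
      ∃ a ∈ Ab b, (φ a '' X) ∩ affNbhd W ε₀ = ∅)
    -- for each ω, `m ω` is the infinite product measure on A^ℕ whose n-th factor
    -- is ν (ω n), characterized by its values on cylinder sets:
    (m : (ℕ → A) → Measure (ℕ → A)) (hmprob : ∀ ω, IsProbabilityMeasure (m ω))
    (hm : ∀ (ω : ℕ → A) (N : ℕ) (w : Fin N → A),
      m ω {a | ∀ j : Fin N, a j = w j} = ∏ j : Fin N, ν (ω j) {w j}) :
    ∃ C α : ℝ, 0 < C ∧ 0 < α ∧
      ∀ (ω : ℕ → A) (W : AffineSubspace ℝ (EuclideanSpace ℝ (Fin d))),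
        (W : Set (EuclideanSpace ℝ (Fin d))).Nonempty → W ≠ ⊤ → ∀ ε : ℝ, 0 < ε →
        Measure.map codingMap (m ω) (affNbhd W ε) ≤ ENNReal.ofReal (C * ε ^ α) := by
  classical
  obtain ⟨hcard, hsim, -⟩ := hΦ
  have hA : Nonempty A := Fintype.card_pos_iff.mp (by omega)
  choose r hr using hsim
  have hr0 : ∀ a, 0 < r a := fun a => (hr a).1
  have hr1 : ∀ a, r a < 1 := fun a => (hr a).2.1
  have hrn : ∀ a x y, ‖φ a x - φ a y‖ = r a * ‖x - y‖ := fun a => (hr a).2.2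
  have hdist : ∀ a x y, dist (φ a x) (φ a y) = r a * dist x y := by
    intro a x y; rw [dist_eq_norm, dist_eq_norm, hrn]
  have hφc : ∀ a, Continuous (φ a) := by
    intro a
    have : LipschitzWith ⟨r a, (hr0 a).le⟩ (φ a) :=
      LipschitzWith.of_dist_le_mul (fun x y => (hdist a x y).le)
    exact this.continuous
  -- bundled affine equivalences
  have hFex : ∀ a, ∃ F : EuclideanSpace ℝ (Fin d) ≃ᵃ[ℝ] EuclideanSpace ℝ (Fin d), ⇑F = φ a :=
    fun a => similarity_affineEquiv (hr0 a) (hrn a)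
  choose F hF using hFex
  -- invariance of X
  have hXsub : ∀ a, ∀ x ∈ X, φ a x ∈ X := by
    intro a x hx
    have : φ a x ∈ ⋃ b, φ b '' X := Set.mem_iUnion.mpr ⟨a, ⟨x, hx, rfl⟩⟩
    rwa [← hXinv] at this
  obtain ⟨x₀, hx₀⟩ := hXne
  have hword : ∀ n (a : ℕ → A), wordMap φ n a x₀ ∈ X := by
    intro n
    induction n with
    | zero => intro a; exact hx₀
    | succ n IH => intro a; exact hXsub _ _ (IH _)
  have hcodX : ∀ a, codingMap a ∈ X := by
    intro a
    exact hXc.isClosed.mem_of_tendsto (hCoding a x₀)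
      (Filter.Eventually.of_forall fun n => hword n a)
  have hshift : ∀ a : ℕ → A, codingMap a = φ (a 0) (codingMap fun k => a (k + 1)) := by
    intro a
    have h1 : Tendsto (fun n => wordMap φ (n + 1) a x₀) atTop (nhds (codingMap a)) :=
      (hCoding a x₀).comp (tendsto_add_atTop_nat 1)
    have h2 : Tendsto (fun n => φ (a 0) (wordMap φ n (fun k => a (k + 1)) x₀)) atTop
        (nhds (φ (a 0) (codingMap fun k => a (k + 1)))) :=
      ((hφc (a 0)).tendsto _).comp (hCoding _ x₀)
    exact tendsto_nhds_unique h1 h2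
  -- comap of affine subspaces
  set cmap : A → AffineSubspace ℝ (EuclideanSpace ℝ (Fin d)) →
      AffineSubspace ℝ (EuclideanSpace ℝ (Fin d)) :=
    fun a V => V.comap (F a).toAffineMap with hcmap
  have hmem : ∀ (a : A) (V : AffineSubspace ℝ (EuclideanSpace ℝ (Fin d))) x,
      x ∈ cmap a V ↔ φ a x ∈ V := by
    intro a V x
    rw [hcmap]
    rw [AffineSubspace.mem_comap, AffineEquiv.coe_toAffineMap, hF]
  have hcm1 : ∀ (a : A) (V : AffineSubspace ℝ (EuclideanSpace ℝ (Fin d))),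
      (V : Set (EuclideanSpace ℝ (Fin d))).Nonempty →
      ((cmap a V : Set (EuclideanSpace ℝ (Fin d)))).Nonempty := by
    rintro a V ⟨p, hp⟩
    refine ⟨(F a).symm p, (hmem a V _).mpr ?_⟩
    rw [← hF a, AffineEquiv.apply_symm_apply]
    exact hp
  have hcm2 : ∀ (a : A) (V : AffineSubspace ℝ (EuclideanSpace ℝ (Fin d))),
      V ≠ ⊤ → cmap a V ≠ ⊤ := by
    intro a V hV h
    apply hV
    rw [eq_top_iff]
    rintro x -
    have hx : (F a).symm x ∈ cmap a V := h ▸ AffineSubspace.mem_top ℝ _ _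
    have := (hmem a V _).mp hx
    rwa [← hF a, AffineEquiv.apply_symm_apply] at this
  set Pred : AffineSubspace ℝ (EuclideanSpace ℝ (Fin d)) → Prop :=
    fun V => (V : Set (EuclideanSpace ℝ (Fin d))).Nonempty ∧ V ≠ ⊤ with hPreddef
  -- good letters
  have hGex : ∀ (b : A) (V : AffineSubspace ℝ (EuclideanSpace ℝ (Fin d))),
      ∃ g : A, Pred V → g ∈ Ab b ∧ (φ g '' X) ∩ affNbhd V ε₀ = ∅ := by
    intro b V
    by_cases h : Pred V
    · obtain ⟨g, hg1, hg2⟩ := hsep b V h.1 h.2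
      exact ⟨g, fun _ => ⟨hg1, hg2⟩⟩
    · exact ⟨Classical.arbitrary A, fun hh => absurd hh h⟩
  choose G hG using hGex
  -- one-step distance estimate
  have hstep : ∀ (a : A) (V : AffineSubspace ℝ (EuclideanSpace ℝ (Fin d))),
      (V : Set (EuclideanSpace ℝ (Fin d))).Nonempty →
      ∀ z, infDist z (cmap a V) * r a ≤ infDist (φ a z) (V : Set (EuclideanSpace ℝ (Fin d))) := by
    intro a V hV z
    by_contra hcon
    push_neg at hcon
    obtain ⟨w, hw, hlt⟩ := (Metric.infDist_lt_iff hV).mp hcon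
    have hw' : (F a).symm w ∈ cmap a V := by
      refine (hmem a V _).mpr ?_
      rw [← hF a, AffineEquiv.apply_symm_apply]
      exact hw
    have h1 : infDist z (cmap a V) ≤ dist z ((F a).symm w) :=
      Metric.infDist_le_dist_of_mem hw'
    have h2 : dist (φ a z) w = r a * dist z ((F a).symm w) := by
      have hww : w = φ a ((F a).symm w) := by
        rw [← hF a, AffineEquiv.apply_symm_apply]
      nth_rewrite 1 [hww]
      exact hdist a z ((F a).symm w)
    have h3 : infDist z (cmap a V) * r a ≤ dist z ((F a).symm w) * r a :=
      mul_le_mul_of_nonneg_right h1 (hr0 a).le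
    rw [h2] at hlt
    linarith
  -- total mass of factor measures
  have hν1 : ∀ b, ∑ a : A, ν b {a} = 1 := by
    intro b
    have hdisj : Pairwise (Function.onFun Disjoint fun a : A => ({a} : Set A)) :=
      fun i j hij => Set.disjoint_singleton.mpr hij
    have h := measure_iUnion (μ := ν b) hdisj (fun a => measurableSet_singleton a)
    rw [Set.iUnion_of_singleton, measure_univ, tsum_fintype] at h
    exact h.symm
  -- the uniform lower bound δ
  have hpairs : ∀ b : A, ∃ a, ν b {a} ≠ 0 := by
    intro b
    by_contra h
    push_neg at h
    have := hν1 b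
    rw [Finset.sum_eq_zero fun a _ => h a] at this
    exact zero_ne_one this
  set pr : Finset (A × A) := Finset.univ.filter (fun p => ν p.1 {p.2} ≠ 0) with hprdef
  have hprne : pr.Nonempty := by
    obtain ⟨a, ha⟩ := hpairs (Classical.arbitrary A)
    exact ⟨(Classical.arbitrary A, a), by simp [hprdef, ha]⟩
  set δ : ℝ≥0∞ := pr.inf' hprne (fun p => ν p.1 {p.2}) with hδdef
  have hδ0 : 0 < δ := by
    rw [hδdef, Finset.lt_inf'_iff]
    intro p hp
    have := (Finset.mem_filter.mp hp).2
    exact pos_iff_ne_zero.mpr this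
  have hδle : ∀ b a, a ∈ Ab b → δ ≤ ν b {a} := by
    intro b a ha
    have hmemf : (b, a) ∈ pr := by
      simp only [hprdef, Finset.mem_filter, Finset.mem_univ, true_and]
      exact (hνpos b a ha).ne'
    exact Finset.inf'_le (fun p : A × A => ν p.1 {p.2}) hmemf
  have hδ1 : δ ≤ 1 := by
    obtain ⟨p, hp⟩ := hprne
    refine le_trans (Finset.inf'_le (fun p : A × A => ν p.1 {p.2}) hp) ?_
    refine le_trans (measure_mono (Set.subset_univ _)) ?_
    rw [measure_univ]
  have hδtop : δ ≠ ∞ := ne_top_of_le_ne_top ENNReal.one_ne_top hδ1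
  set q : ℝ := (1 - δ).toReal with hqdef
  have hq0 : 0 ≤ q := ENNReal.toReal_nonneg
  have hsub_ne : (1 : ℝ≥0∞) - δ ≠ ∞ := ne_top_of_le_ne_top ENNReal.one_ne_top tsub_le_self
  have hq1 : q < 1 := by
    have hlt : (1 : ℝ≥0∞) - δ < 1 := ENNReal.sub_lt_self ENNReal.one_ne_top one_ne_zero hδ0.ne'
    have := ENNReal.toReal_lt_toReal hsub_ne ENNReal.one_ne_top |>.mpr hlt
    simpa using this
  -- the minimal contraction ratio
  have hAfin : (Finset.univ : Finset A).Nonempty := Finset.univ_nonempty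
  set ρ : ℝ := Finset.univ.inf' hAfin r with hρdef
  have hρ0 : 0 < ρ := by
    rw [hρdef, Finset.lt_inf'_iff]
    exact fun a _ => hr0 a
  have hρle : ∀ a, ρ ≤ r a := fun a => Finset.inf'_le _ (Finset.mem_univ a)
  have hρ1 : ρ < 1 := lt_of_le_of_lt (hρle (Classical.arbitrary A)) (hr1 _)
  set q' : ℝ := max q ρ with hq'def
  have hq'0 : 0 < q' := lt_of_lt_of_le hρ0 (le_max_right _ _)
  have hq'1 : q' < 1 := max_lt hq1 hρ1
  set α : ℝ := Real.log q' / Real.log ρ with hαdef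
  have hlogρ : Real.log ρ < 0 := Real.log_neg hρ0 hρ1
  have hlogq' : Real.log q' < 0 := Real.log_neg hq'0 hq'1
  have hα0 : 0 < α := div_pos_of_neg_of_neg hlogq' hlogρ
  have hρα : ρ ^ α = q' := by
    rw [hαdef, Real.rpow_def_of_pos hρ0, mul_comm, div_mul_cancel₀ _ hlogρ.ne]
    exact Real.exp_log hq'0
  set C : ℝ := ((ε₀ * ρ)⁻¹) ^ α with hCdef
  have hC0 : 0 < C := Real.rpow_pos_of_pos (inv_pos.mpr (mul_pos hε₀ hρ0)) _
  -- measurability of the coding map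
  have hmeasw : ∀ n, Measurable fun a : ℕ → A => wordMap φ n a x₀ := by
    intro n
    induction n with
    | zero => exact measurable_const
    | succ n IH =>
      have hshiftm : Measurable fun a : ℕ → A => (fun k => a (k + 1)) :=
        measurable_pi_lambda _ fun k => measurable_pi_apply (k + 1)
      have htail : Measurable fun a : ℕ → A => wordMap φ n (fun k => a (k + 1)) x₀ :=
        IH.comp hshiftm
      have heq : (fun a : ℕ → A => wordMap φ (n + 1) a x₀)
          = fun a => ∑ b : A,
              if a 0 = b then φ b (wordMap φ n (fun k => a (k + 1)) x₀) else 0 := by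
        funext a
        rw [Finset.sum_ite_eq Finset.univ (a 0)
          (fun b => φ b (wordMap φ n (fun k => a (k + 1)) x₀)), if_pos (Finset.mem_univ _)]
        rfl
      rw [heq]
      apply Finset.measurable_sum
      intro b _
      have hset : MeasurableSet {a : ℕ → A | a 0 = b} := by
        have hh : MeasurableSet ((fun f : ℕ → A => f 0) ⁻¹' {b}) :=
          measurable_pi_apply 0 (measurableSet_singleton b)
        exact hh
      exact Measurable.ite hset ((hφc b).measurable.comp htail) measurable_const
  have hcodmeas : Measurable codingMap :=
    measurable_of_tendsto_metrizable hmeasw (tendsto_pi_nhds.mpr fun a => hCoding a x₀)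
  -- Claim A : points of the preimage of a thin neighbourhood give allowed words
  have claimA : ∀ n (ω' : ℕ → A) (V : AffineSubspace ℝ (EuclideanSpace ℝ (Fin d))), Pred V →
      ∀ a : ℕ → A, infDist (codingMap a) (V : Set (EuclideanSpace ℝ (Fin d))) ≤ ε₀ * ρ ^ n →
      Allowed G cmap n ω' V fun j => a j := by
    intro n
    induction n with
    | zero => intro ω' V hV a ha; exact trivial
    | succ n IH =>
      intro ω' V hV a ha
      have hres : codingMap a = φ (a 0) (codingMap fun k => a (k + 1)) := hshift a
      have hXa : (codingMap fun k => a (k + 1)) ∈ X := hcodX _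
      set y := codingMap fun k => a (k + 1) with hy
      set S : Set (EuclideanSpace ℝ (Fin d)) := (cmap (a 0) V : Set (EuclideanSpace ℝ (Fin d)))
        with hSdef
      refine And.intro ?_ ?_
      · intro h0
        have h0' : a 0 = G (ω' 0) V := h0
        have hGs := (hG (ω' 0) V hV).2
        apply Set.eq_empty_iff_forall_notMem.mp hGs (codingMap a)
        constructor
        · refine ⟨y, hXa, ?_⟩
          rw [← h0', ← hres]
        · show infDist (codingMap a) (V : Set (EuclideanSpace ℝ (Fin d))) ≤ ε₀
          have hpow : ε₀ * ρ ^ (n + 1) ≤ ε₀ :=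
            by nlinarith [pow_le_one₀ hρ0.le hρ1.le (n := n + 1), hε₀.le]
          exact le_trans ha hpow
      · have h1 : infDist y S * r (a 0)
            ≤ infDist (codingMap a) (V : Set (EuclideanSpace ℝ (Fin d))) := by
          rw [hres]
          exact hstep _ _ hV.1 _
        have hb : (0 : ℝ) ≤ ε₀ * ρ ^ n := by positivity
        have h2 : infDist y S ≤ ε₀ * ρ ^ n := by
          have t1 : infDist y S * r (a 0) ≤ (ε₀ * ρ ^ n) * ρ := by
            refine le_trans (le_trans h1 ha) (le_of_eq ?_)
            ring
          have t2 : (ε₀ * ρ ^ n) * ρ ≤ (ε₀ * ρ ^ n) * r (a 0) :=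
            mul_le_mul_of_nonneg_left (hρle _) hb
          exact le_of_mul_le_mul_right (le_trans t1 t2) (hr0 _)
        have hPred' : Pred (cmap (a 0) V) := ⟨hcm1 _ _ hV.1, hcm2 _ _ hV.2⟩
        exact IH (fun k => ω' (k + 1)) (cmap (a 0) V) hPred' (fun k => a (k + 1)) h2
  refine ⟨C, α, hC0, hα0, ?_⟩
  intro ω W hWne hWtop ε hε
  haveI := hmprob ω
  -- main estimate for a given n
  have hmain : ∀ n : ℕ, ε ≤ ε₀ * ρ ^ n →
      Measure.map codingMap (m ω) (affNbhd W ε) ≤ (1 - δ) ^ n := by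
    intro n hn
    have hclosed : MeasurableSet (affNbhd W ε) :=
      (isClosed_le (continuous_infDist_pt _) continuous_const).measurableSet
    rw [Measure.map_apply hcodmeas hclosed]
    have hsub2 : codingMap ⁻¹' affNbhd W ε ⊆
        ⋃ w : Fin n → A, if Allowed G cmap n ω W w
          then {a : ℕ → A | ∀ j : Fin n, a j = w j} else ∅ := by
      intro a ha
      have hAll : Allowed G cmap n ω W fun j => a j :=
        claimA n ω W ⟨hWne, hWtop⟩ a (le_trans ha hn)
      refine Set.mem_iUnion.mpr ⟨fun j => a j, ?_⟩
      rw [if_pos hAll]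
      exact fun j => rfl
    calc m ω (codingMap ⁻¹' affNbhd W ε)
        ≤ m ω (⋃ w : Fin n → A, if Allowed G cmap n ω W w
            then {a : ℕ → A | ∀ j : Fin n, a j = w j} else ∅) := measure_mono hsub2
      _ ≤ ∑' w : Fin n → A, m ω (if Allowed G cmap n ω W w
            then {a : ℕ → A | ∀ j : Fin n, a j = w j} else ∅) := measure_iUnion_le _
      _ = ∑ w : Fin n → A, m ω (if Allowed G cmap n ω W w
            then {a : ℕ → A | ∀ j : Fin n, a j = w j} else ∅) := tsum_fintype _
      _ = ∑ w : Fin n → A, (if Allowed G cmap n ω W w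
            then ∏ j : Fin n, ν (ω j) {w j} else 0) := by
          refine Finset.sum_congr rfl fun w _ => ?_
          split_ifs with h
          · exact hm ω n w
          · exact measure_empty
      _ ≤ badSum (fun b a => ν b {a}) G cmap n ω W :=
          sum_allowed_le (fun b a => ν b {a}) G cmap n ω W
      _ ≤ (1 - δ) ^ n := by
          refine badSum_le (fun b a => ν b {a}) G cmap Pred
            (fun a v hv => ⟨hcm1 _ _ hv.1, hcm2 _ _ hv.2⟩) δ hδtop
            (fun b => (hν1 b).le) (fun b v hv => hδle _ _ (hG b v hv).1) n ω W
            ⟨hWne, hWtop⟩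
  by_cases hcase : ε ≤ ε₀
  · obtain ⟨N, hN⟩ : ∃ N : ℕ, ε₀ * ρ ^ N < ε := by
      obtain ⟨N, hN⟩ := exists_pow_lt_of_lt_one (div_pos hε hε₀) hρ1
      refine ⟨N, ?_⟩
      have := (lt_div_iff₀' hε₀).mp hN
      linarith [this]
    have hPfind : ∃ k, ε₀ * ρ ^ k < ε := ⟨N, hN⟩
    have hk_spec : ε₀ * ρ ^ Nat.find hPfind < ε := Nat.find_spec hPfind
    have hk0 : Nat.find hPfind ≠ 0 := by
      intro h
      rw [h, pow_zero, mul_one] at hk_spec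
      exact absurd hcase (not_le.mpr hk_spec)
    obtain ⟨n, hn⟩ := Nat.exists_eq_succ_of_ne_zero hk0
    have hn_le : ε ≤ ε₀ * ρ ^ n := by
      have := Nat.find_min hPfind (by omega : n < Nat.find hPfind)
      exact not_lt.mp this
    have hk_spec' : ε₀ * ρ ^ (n + 1) < ε := by rw [hn] at hk_spec; exact hk_spec
    refine le_trans (hmain n hn_le) ?_
    have h1 : ((1 : ℝ≥0∞) - δ) ^ n = ENNReal.ofReal (q ^ n) := by
      rw [ENNReal.ofReal_pow hq0, hqdef, ENNReal.ofReal_toReal hsub_ne]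
    rw [h1]
    apply ENNReal.ofReal_le_ofReal
    have s1 : q ^ n ≤ q' ^ n := pow_le_pow_left₀ hq0 (le_max_left _ _) n
    have s2 : q' ^ n = (ρ ^ n) ^ α := by
      rw [← hρα, ← Real.rpow_natCast (ρ ^ α) n, ← Real.rpow_mul hρ0.le, mul_comm,
        Real.rpow_mul hρ0.le, Real.rpow_natCast]
    have s3 : ρ ^ n ≤ ε * (ε₀ * ρ)⁻¹ := by
      rw [pow_succ] at hk_spec'
      rw [← div_eq_mul_inv]
      rw [le_div_iff₀ (mul_pos hε₀ hρ0)]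
      nlinarith [hk_spec']
    have s4 : (ρ ^ n) ^ α ≤ (ε * (ε₀ * ρ)⁻¹) ^ α :=
      Real.rpow_le_rpow (pow_nonneg hρ0.le n) s3 hα0.le
    have s5 : (ε * (ε₀ * ρ)⁻¹) ^ α = ε ^ α * C := by
      rw [hCdef, ← Real.mul_rpow hε.le (inv_nonneg.mpr (mul_pos hε₀ hρ0).le)]
    calc q ^ n ≤ q' ^ n := s1
      _ = (ρ ^ n) ^ α := s2
      _ ≤ ε ^ α * C := s4.trans_eq s5
      _ = C * ε ^ α := mul_comm _ _
  · push_neg at hcase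
    haveI : IsProbabilityMeasure (Measure.map codingMap (m ω)) :=
      Measure.isProbabilityMeasure_map hcodmeas.aemeasurable
    refine le_trans prob_le_one ?_
    rw [← ENNReal.ofReal_one]
    apply ENNReal.ofReal_le_ofReal
    have h2 : C * ε₀ ^ α = (ρ⁻¹) ^ α := by
      rw [hCdef, ← Real.mul_rpow (by positivity) hε₀.le]
      congr 1
      field_simp
    have h3 : (1 : ℝ) ≤ (ρ⁻¹) ^ α := by
      have hh : (1 : ℝ) = (1 : ℝ) ^ α := (Real.one_rpow α).symm
      rw [hh]
      exact Real.rpow_le_rpow zero_le_one ((one_le_inv₀ hρ0).mpr hρ1.le) hα0.le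
    have h4 : C * ε₀ ^ α ≤ C * ε ^ α :=
      mul_le_mul_of_nonneg_left (Real.rpow_le_rpow hε₀.le hcase.le hα0.le) hC0.le
    linarith [h2 ▸ h3]
end
end

section
/- Let φ_0, φ_1 : ℝ → ℝ be given by φ_0(x) = x/2 and φ_1(x) = (x+1)/2, let p_0 ∈ (0, 1/2), p_1 = 1 − p_0, and let μ be the unique Borel probability measure on ℝ with μ = p_0·(φ_0)_*μ + p_1·(φ_1)_*μ. Then there do NOT exist constants C, α > 0 such that for every x in the support of μ, every y ∈ ℝ, every r with 0 < r ≤ 1 and every ε > 0, μ(B(y, εr) ∩ B(x,r)) ≤ C ε^α μ(B(x,r)). -/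
noncomputable section
open MeasureTheory Metric Filter Topology

variable {E : Type*} [NormedAddCommGroup E] [NormedSpace ℝ E]

section NoDecayAux

open Set
open scoped ENNReal

lemma preA_Icc (a b : ℝ) : (fun x : ℝ => x / 2) ⁻¹' Set.Icc a b = Set.Icc (2 * a) (2 * b) := by
  ext x
  simp only [Set.mem_preimage, Set.mem_Icc]
  constructor <;> intro h <;> exact ⟨by linarith [h.1], by linarith [h.2]⟩

lemma preB_Icc (a b : ℝ) :
    (fun x : ℝ => (x + 1) / 2) ⁻¹' Set.Icc a b = Set.Icc (2 * a - 1) (2 * b - 1) := by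
  ext x
  simp only [Set.mem_preimage, Set.mem_Icc]
  constructor <;> intro h <;> exact ⟨by linarith [h.1], by linarith [h.2]⟩

lemma preA_Iio (c : ℝ) : (fun x : ℝ => x / 2) ⁻¹' Set.Iio c = Set.Iio (2 * c) := by
  ext x
  simp only [Set.mem_preimage, Set.mem_Iio]
  constructor <;> intro h <;> linarith

lemma preB_Iio (c : ℝ) :
    (fun x : ℝ => (x + 1) / 2) ⁻¹' Set.Iio c = Set.Iio (2 * c - 1) := by
  ext x
  simp only [Set.mem_preimage, Set.mem_Iio]
  constructor <;> intro h <;> linarith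

lemma preA_Ioi (c : ℝ) : (fun x : ℝ => x / 2) ⁻¹' Set.Ioi c = Set.Ioi (2 * c) := by
  ext x
  simp only [Set.mem_preimage, Set.mem_Ioi]
  constructor <;> intro h <;> linarith

lemma preB_Ioi (c : ℝ) :
    (fun x : ℝ => (x + 1) / 2) ⁻¹' Set.Ioi c = Set.Ioi (2 * c - 1) := by
  ext x
  simp only [Set.mem_preimage, Set.mem_Ioi]
  constructor <;> intro h <;> linarith

lemma preA_sing (c : ℝ) : (fun x : ℝ => x / 2) ⁻¹' {c} = {2 * c} := by
  ext x
  simp only [Set.mem_preimage, Set.mem_singleton_iff]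
  constructor <;> intro h <;> linarith

lemma preB_sing (c : ℝ) : (fun x : ℝ => (x + 1) / 2) ⁻¹' {c} = {2 * c - 1} := by
  ext x
  simp only [Set.mem_preimage, Set.mem_singleton_iff]
  constructor <;> intro h <;> linarith

lemma cancel_aux {P Q a b u : ℝ≥0∞} (hu : u ≠ ⊤) (hQ0 : Q ≠ 0) (hQt : Q ≠ ⊤) (hPt : P ≠ ⊤)
    (hPQ : P + Q = 1) (h : u = P * a + Q * b) (ha : a ≤ u) (hb : b ≤ u) : b = u := by
  refine le_antisymm hb ?_
  have h2 : P * u + Q * u ≤ P * u + Q * b := by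
    rw [← add_mul, hPQ, one_mul]
    calc u = P * a + Q * b := h
    _ ≤ P * u + Q * b := add_le_add_left (mul_le_mul_right ha P) _
  have h3 : Q * u ≤ Q * b := (ENNReal.add_le_add_iff_left (ENNReal.mul_ne_top hPt hu)).mp h2
  exact (ENNReal.mul_le_mul_iff_right hQ0 hQt).mp h3

variable {p₀ : ℝ} {μ : Measure ℝ}

/-- Abbreviation for the self-similarity functional equation evaluated on sets. -/
def EqHyp (p₀ : ℝ) (μ : Measure ℝ) : Prop :=
  ∀ S : Set ℝ, MeasurableSet S →
    μ S = ENNReal.ofReal p₀ * μ ((fun x : ℝ => x / 2) ⁻¹' S) +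
      ENNReal.ofReal (1 - p₀) * μ ((fun x : ℝ => (x + 1) / 2) ⁻¹' S)

lemma mu_Iio_zero (hp₀ : 0 < p₀) (hp₀' : p₀ < 1 / 2) [IsProbabilityMeasure μ]
    (heq : EqHyp p₀ μ) : μ (Set.Iio 0) = 0 := by
  have hp1 : (0 : ℝ) < 1 - p₀ := by linarith
  have hsum : ENNReal.ofReal p₀ + ENNReal.ofReal (1 - p₀) = 1 := by
    rw [← ENNReal.ofReal_add hp₀.le hp1.le]
    norm_num
  have hstep : ∀ t : ℝ, 0 ≤ t → μ (Set.Iio (-t)) = μ (Set.Iio 0) →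
      μ (Set.Iio (-(2 * t + 1))) = μ (Set.Iio 0) := by
    intro t ht h
    have h0 := heq (Set.Iio (-t)) measurableSet_Iio
    rw [preA_Iio, preB_Iio, show (2 : ℝ) * (-t) - 1 = -(2 * t + 1) by ring,
      show (2 : ℝ) * (-t) = -(2 * t) by ring, h] at h0
    refine cancel_aux (measure_ne_top μ _) ?_ ENNReal.ofReal_ne_top ENNReal.ofReal_ne_top hsum h0
      (measure_mono (Set.Iio_subset_Iio (by linarith)))
      (measure_mono (Set.Iio_subset_Iio (by linarith)))
    exact (ENNReal.ofReal_pos.mpr hp1).ne'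
  have hk : ∀ k : ℕ, μ (Set.Iio (-(2 ^ k - 1 : ℝ))) = μ (Set.Iio 0) := by
    intro k
    induction k with
    | zero => norm_num
    | succ k ih =>
      have h1 : (1 : ℝ) ≤ 2 ^ k := one_le_pow₀ (by norm_num)
      have h2 := hstep (2 ^ k - 1) (by linarith) ih
      rwa [show 2 * ((2 : ℝ) ^ k - 1) + 1 = 2 ^ (k + 1) - 1 by ring] at h2
  have hanti : Antitone (fun k : ℕ => Set.Iio (-(2 ^ k - 1 : ℝ))) := by
    intro i j hij
    apply Set.Iio_subset_Iio
    have : (2 : ℝ) ^ i ≤ 2 ^ j := pow_le_pow_right₀ (by norm_num) hij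
    linarith
  have hint : (⋂ k : ℕ, Set.Iio (-(2 ^ k - 1 : ℝ))) = ∅ := by
    ext x
    simp only [Set.mem_iInter, Set.mem_Iio, Set.mem_empty_iff_false, iff_false, not_forall,
      not_lt]
    obtain ⟨k, hk'⟩ := pow_unbounded_of_one_lt (1 - x) (by norm_num : (1 : ℝ) < 2)
    exact ⟨k, by linarith⟩
  have hlim := tendsto_measure_iInter_atTop (μ := μ)
    (fun k => measurableSet_Iio.nullMeasurableSet) hanti ⟨0, measure_ne_top μ _⟩
  rw [hint] at hlim
  simp only [measure_empty] at hlim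
  have hconst : Tendsto (fun _ : ℕ => μ (Set.Iio (0 : ℝ))) atTop (𝓝 0) :=
    hlim.congr fun k => hk k
  exact tendsto_nhds_unique tendsto_const_nhds hconst

lemma mu_Ioi_zero (hp₀ : 0 < p₀) (hp₀' : p₀ < 1 / 2) [IsProbabilityMeasure μ]
    (heq : EqHyp p₀ μ) : μ (Set.Ioi 1) = 0 := by
  have hp1 : (0 : ℝ) < 1 - p₀ := by linarith
  have hsum : ENNReal.ofReal (1 - p₀) + ENNReal.ofReal p₀ = 1 := by
    rw [← ENNReal.ofReal_add hp1.le hp₀.le]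
    norm_num
  have hstep : ∀ t : ℝ, 0 ≤ t → μ (Set.Ioi (1 + t)) = μ (Set.Ioi 1) →
      μ (Set.Ioi (1 + (2 * t + 1))) = μ (Set.Ioi 1) := by
    intro t ht h
    have h0 := heq (Set.Ioi (1 + t)) measurableSet_Ioi
    rw [preA_Ioi, preB_Ioi, show (2 : ℝ) * (1 + t) - 1 = 1 + 2 * t by ring,
      show (2 : ℝ) * (1 + t) = 1 + (2 * t + 1) by ring, h, add_comm] at h0
    refine cancel_aux (measure_ne_top μ _) ?_ ENNReal.ofReal_ne_top ENNReal.ofReal_ne_top hsum h0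
      (measure_mono (Set.Ioi_subset_Ioi (by linarith)))
      (measure_mono (Set.Ioi_subset_Ioi (by linarith)))
    exact (ENNReal.ofReal_pos.mpr hp₀).ne'
  have hk : ∀ k : ℕ, μ (Set.Ioi ((2 : ℝ) ^ k)) = μ (Set.Ioi 1) := by
    intro k
    induction k with
    | zero => norm_num
    | succ k ih =>
      have h1 : (1 : ℝ) ≤ 2 ^ k := one_le_pow₀ (by norm_num)
      have h2 := hstep (2 ^ k - 1) (by linarith)
        (by rwa [show (1 : ℝ) + (2 ^ k - 1) = 2 ^ k by ring])
      rwa [show (1 : ℝ) + (2 * (2 ^ k - 1) + 1) = 2 ^ (k + 1) by ring] at h2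
  have hanti : Antitone (fun k : ℕ => Set.Ioi ((2 : ℝ) ^ k)) := by
    intro i j hij
    exact Set.Ioi_subset_Ioi (pow_le_pow_right₀ (by norm_num) hij)
  have hint : (⋂ k : ℕ, Set.Ioi ((2 : ℝ) ^ k)) = ∅ := by
    ext x
    simp only [Set.mem_iInter, Set.mem_Ioi, Set.mem_empty_iff_false, iff_false, not_forall,
      not_lt]
    obtain ⟨k, hk'⟩ := pow_unbounded_of_one_lt x (by norm_num : (1 : ℝ) < 2)
    exact ⟨k, hk'.le⟩
  have hlim := tendsto_measure_iInter_atTop (μ := μ)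
    (fun k => measurableSet_Ioi.nullMeasurableSet) hanti ⟨0, measure_ne_top μ _⟩
  rw [hint] at hlim
  simp only [measure_empty] at hlim
  have hconst : Tendsto (fun _ : ℕ => μ (Set.Ioi (1 : ℝ))) atTop (𝓝 0) :=
    hlim.congr fun k => hk k
  exact tendsto_nhds_unique tendsto_const_nhds hconst

lemma mu_Iic_zero (hp₀ : 0 < p₀) (hp₀' : p₀ < 1 / 2) [IsProbabilityMeasure μ]
    (heq : EqHyp p₀ μ) : μ (Set.Iic 0) = 0 := by
  have hIio := mu_Iio_zero hp₀ hp₀' heq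
  have h0 : μ {(0 : ℝ)} = 0 := by
    have h0 := heq {0} (measurableSet_singleton 0)
    rw [preA_sing, preB_sing, show (2 : ℝ) * 0 - 1 = -1 by ring,
      show (2 : ℝ) * 0 = 0 by ring] at h0
    have hm1 : μ {(-1 : ℝ)} = 0 := by
      refine measure_mono_null ?_ hIio
      intro x hx
      simp only [Set.mem_singleton_iff] at hx
      rw [hx]
      simp only [Set.mem_Iio]
      norm_num
    rw [hm1, mul_zero, add_zero] at h0
    by_contra hne
    have hlt : ENNReal.ofReal p₀ * μ {(0 : ℝ)} < 1 * μ {(0 : ℝ)} :=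
      (ENNReal.mul_lt_mul_iff_left hne (measure_ne_top μ _)).mpr
        (ENNReal.ofReal_lt_one.mpr (by linarith))
    rw [one_mul] at hlt
    exact absurd h0.symm hlt.ne
  have hsub : Set.Iic (0 : ℝ) ⊆ Set.Iio 0 ∪ {0} := by
    intro x hx
    have hx' : x ≤ 0 := hx
    rcases hx'.lt_or_eq with h | h
    · exact Or.inl h
    · exact Or.inr (by simp [h])
  exact measure_mono_null hsub (measure_union_null hIio h0)

lemma mu_Ici_zero (hp₀ : 0 < p₀) (hp₀' : p₀ < 1 / 2) [IsProbabilityMeasure μ]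
    (heq : EqHyp p₀ μ) : μ (Set.Ici 1) = 0 := by
  have hIoi := mu_Ioi_zero hp₀ hp₀' heq
  have h1 : μ {(1 : ℝ)} = 0 := by
    have h0 := heq {1} (measurableSet_singleton 1)
    rw [preA_sing, preB_sing, show (2 : ℝ) * 1 - 1 = 1 by ring,
      show (2 : ℝ) * 1 = 2 by ring] at h0
    have hm2 : μ {(2 : ℝ)} = 0 := by
      refine measure_mono_null ?_ hIoi
      intro x hx
      simp only [Set.mem_singleton_iff] at hx
      rw [hx]
      simp only [Set.mem_Ioi]
      norm_num
    rw [hm2, mul_zero, zero_add] at h0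
    by_contra hne
    have hlt : ENNReal.ofReal (1 - p₀) * μ {(1 : ℝ)} < 1 * μ {(1 : ℝ)} :=
      (ENNReal.mul_lt_mul_iff_left hne (measure_ne_top μ _)).mpr
        (ENNReal.ofReal_lt_one.mpr (by linarith))
    rw [one_mul] at hlt
    exact absurd h0.symm hlt.ne
  have hsub : Set.Ici (1 : ℝ) ⊆ Set.Ioi 1 ∪ {1} := by
    intro x hx
    have hx' : 1 ≤ x := hx
    rcases hx'.lt_or_eq with h | h
    · exact Or.inl h
    · exact Or.inr (by simp [h.symm])
  exact measure_mono_null hsub (measure_union_null hIoi h1)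

lemma mu_Icc01 (hp₀ : 0 < p₀) (hp₀' : p₀ < 1 / 2) [IsProbabilityMeasure μ]
    (heq : EqHyp p₀ μ) : μ (Set.Icc 0 1) = 1 := by
  refine le_antisymm prob_le_one ?_
  have hcover : (Set.univ : Set ℝ) ⊆ Set.Iic 0 ∪ (Set.Icc 0 1 ∪ Set.Ici 1) := by
    intro x _
    simp only [Set.mem_union, Set.mem_Iic, Set.mem_Icc, Set.mem_Ici]
    rcases le_total x 0 with h | h
    · exact Or.inl h
    · rcases le_total x 1 with h' | h'
      · exact Or.inr (Or.inl ⟨h, h'⟩)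
      · exact Or.inr (Or.inr h')
  calc (1 : ℝ≥0∞) = μ Set.univ := measure_univ.symm
  _ ≤ μ (Set.Iic 0 ∪ (Set.Icc 0 1 ∪ Set.Ici 1)) := measure_mono hcover
  _ ≤ μ (Set.Iic 0) + μ (Set.Icc 0 1 ∪ Set.Ici 1) := measure_union_le _ _
  _ ≤ μ (Set.Iic 0) + (μ (Set.Icc 0 1) + μ (Set.Ici 1)) :=
      add_le_add_right (measure_union_le _ _) _
  _ = μ (Set.Icc 0 1) := by
      rw [mu_Iic_zero hp₀ hp₀' heq, mu_Ici_zero hp₀ hp₀' heq, zero_add, add_zero]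

lemma mu_A (hp₀ : 0 < p₀) (hp₀' : p₀ < 1 / 2) [IsProbabilityMeasure μ]
    (heq : EqHyp p₀ μ) (k : ℕ) :
    μ (Set.Icc (1 - (1 / 2 : ℝ) ^ k) 1) = ENNReal.ofReal (1 - p₀) ^ k := by
  induction k with
  | zero => simpa using mu_Icc01 hp₀ hp₀' heq
  | succ k ih =>
    have h0 := heq (Set.Icc (1 - (1 / 2 : ℝ) ^ (k + 1)) 1) measurableSet_Icc
    rw [preA_Icc, preB_Icc] at h0
    have hk1 : (1 / 2 : ℝ) ^ k ≤ 1 := pow_le_one₀ (by norm_num) (by norm_num)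
    have hz : μ (Set.Icc (2 * (1 - (1 / 2 : ℝ) ^ (k + 1))) (2 * 1)) = 0 := by
      refine measure_mono_null ?_ (mu_Ici_zero hp₀ hp₀' heq)
      intro x hx
      have := hx.1
      rw [pow_succ] at this
      simp only [Set.mem_Ici]
      linarith
    rw [hz, mul_zero, zero_add,
      show 2 * (1 - (1 / 2 : ℝ) ^ (k + 1)) - 1 = 1 - (1 / 2 : ℝ) ^ k by rw [pow_succ]; ring,
      show (2 : ℝ) * 1 - 1 = 1 by ring, ih] at h0
    rw [h0, pow_succ, mul_comm]

lemma mu_B (hp₀ : 0 < p₀) (hp₀' : p₀ < 1 / 2) [IsProbabilityMeasure μ]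
    (heq : EqHyp p₀ μ) (k : ℕ) :
    μ (Set.Icc 0 ((1 / 2 : ℝ) ^ k)) = ENNReal.ofReal p₀ ^ k := by
  induction k with
  | zero => simpa using mu_Icc01 hp₀ hp₀' heq
  | succ k ih =>
    have h0 := heq (Set.Icc 0 ((1 / 2 : ℝ) ^ (k + 1))) measurableSet_Icc
    rw [preA_Icc, preB_Icc] at h0
    have hk1 : (1 / 2 : ℝ) ^ k ≤ 1 := pow_le_one₀ (by norm_num) (by norm_num)
    have hz : μ (Set.Icc (2 * (0 : ℝ) - 1) (2 * (1 / 2 : ℝ) ^ (k + 1) - 1)) = 0 := by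
      refine measure_mono_null ?_ (mu_Iic_zero hp₀ hp₀' heq)
      intro x hx
      have := hx.2
      rw [pow_succ] at this
      simp only [Set.mem_Iic]
      linarith
    rw [hz, show (2 : ℝ) * 0 = 0 by ring,
      show 2 * (1 / 2 : ℝ) ^ (k + 1) = (1 / 2 : ℝ) ^ k by rw [pow_succ]; ring,
      mul_zero, add_zero, ih] at h0
    rw [h0, pow_succ, mul_comm]

lemma mu_L (hp₀ : 0 < p₀) (hp₀' : p₀ < 1 / 2) [IsProbabilityMeasure μ]
    (heq : EqHyp p₀ μ) (j : ℕ) :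
    μ (Set.Icc (1 / 2 - (1 / 2 : ℝ) ^ (j + 1)) (1 / 2)) =
      ENNReal.ofReal p₀ * ENNReal.ofReal (1 - p₀) ^ j := by
  have h0 := heq (Set.Icc (1 / 2 - (1 / 2 : ℝ) ^ (j + 1)) (1 / 2)) measurableSet_Icc
  rw [preA_Icc, preB_Icc] at h0
  have hj1 : (1 / 2 : ℝ) ^ j ≤ 1 := pow_le_one₀ (by norm_num) (by norm_num)
  have hz : μ (Set.Icc (2 * (1 / 2 - (1 / 2 : ℝ) ^ (j + 1)) - 1) (2 * (1 / 2 : ℝ) - 1)) = 0 := by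
    refine measure_mono_null ?_ (mu_Iic_zero hp₀ hp₀' heq)
    intro x hx
    have := hx.2
    simp only [Set.mem_Iic]
    linarith
  rw [hz, mul_zero, add_zero,
    show 2 * (1 / 2 - (1 / 2 : ℝ) ^ (j + 1)) = 1 - (1 / 2 : ℝ) ^ j by rw [pow_succ]; ring,
    show (2 : ℝ) * (1 / 2) = 1 by ring, mu_A hp₀ hp₀' heq j] at h0
  exact h0

lemma mu_R (hp₀ : 0 < p₀) (hp₀' : p₀ < 1 / 2) [IsProbabilityMeasure μ]
    (heq : EqHyp p₀ μ) (j : ℕ) :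
    μ (Set.Icc (1 / 2 : ℝ) (1 / 2 + (1 / 2 : ℝ) ^ (j + 1))) =
      ENNReal.ofReal (1 - p₀) * ENNReal.ofReal p₀ ^ j := by
  have h0 := heq (Set.Icc (1 / 2 : ℝ) (1 / 2 + (1 / 2 : ℝ) ^ (j + 1))) measurableSet_Icc
  rw [preA_Icc, preB_Icc] at h0
  have hz : μ (Set.Icc (2 * (1 / 2 : ℝ)) (2 * (1 / 2 + (1 / 2 : ℝ) ^ (j + 1)))) = 0 := by
    refine measure_mono_null ?_ (mu_Ici_zero hp₀ hp₀' heq)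
    intro x hx
    have := hx.1
    simp only [Set.mem_Ici]
    linarith
  rw [hz, mul_zero, zero_add,
    show 2 * (1 / 2 : ℝ) - 1 = 0 by ring,
    show 2 * (1 / 2 + (1 / 2 : ℝ) ^ (j + 1)) - 1 = (1 / 2 : ℝ) ^ j by rw [pow_succ]; ring,
    mu_B hp₀ hp₀' heq j] at h0
  exact h0

lemma mu_cyl (hp₀ : 0 < p₀) (hp₀' : p₀ < 1 / 2) [IsProbabilityMeasure μ]
    (heq : EqHyp p₀ μ) :
    ∀ k : ℕ, ∀ j : ℕ, j < 2 ^ k →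
      ENNReal.ofReal p₀ ^ k ≤ μ (Set.Icc ((j : ℝ) / 2 ^ k) (((j : ℝ) + 1) / 2 ^ k)) := by
  intro k
  induction k with
  | zero =>
    intro j hj
    have : j = 0 := by omega
    subst this
    simp only [pow_zero]
    norm_num
    rw [mu_Icc01 hp₀ hp₀' heq]
  | succ k ih =>
    intro j hj
    have h0 := heq (Set.Icc ((j : ℝ) / 2 ^ (k + 1)) (((j : ℝ) + 1) / 2 ^ (k + 1)))
      measurableSet_Icc
    rw [preA_Icc, preB_Icc] at h0
    have hpow : (2 : ℝ) ^ (k + 1) = 2 ^ k * 2 := pow_succ 2 k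
    have h2k : (0 : ℝ) < 2 ^ k := by positivity
    by_cases hcase : j < 2 ^ k
    · rw [show 2 * ((j : ℝ) / 2 ^ (k + 1)) = (j : ℝ) / 2 ^ k by rw [hpow]; field_simp; try ring,
        show 2 * (((j : ℝ) + 1) / 2 ^ (k + 1)) = ((j : ℝ) + 1) / 2 ^ k by
          rw [hpow]; field_simp; try ring] at h0
      calc ENNReal.ofReal p₀ ^ (k + 1) = ENNReal.ofReal p₀ * ENNReal.ofReal p₀ ^ k := by
            rw [pow_succ, mul_comm]
      _ ≤ ENNReal.ofReal p₀ * μ (Set.Icc ((j : ℝ) / 2 ^ k) (((j : ℝ) + 1) / 2 ^ k)) :=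
            mul_le_mul_right (ih j hcase) _
      _ ≤ _ := by rw [h0]; exact le_self_add
    · push_neg at hcase
      set j' := j - 2 ^ k with hj'def
      have hnat : j = j' + 2 ^ k := (Nat.sub_add_cancel hcase).symm
      have hjc : (j : ℝ) = (j' : ℝ) + 2 ^ k := by
        rw [hnat]; push_cast; ring
      have hjlt : j' < 2 ^ k := by
        have : 2 ^ (k + 1) = 2 ^ k * 2 := pow_succ 2 k
        omega
      rw [show 2 * ((j : ℝ) / 2 ^ (k + 1)) - 1 = (j' : ℝ) / 2 ^ k by
            rw [hjc, hpow]; field_simp; try ring,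
          show 2 * (((j : ℝ) + 1) / 2 ^ (k + 1)) - 1 = ((j' : ℝ) + 1) / 2 ^ k by
            rw [hjc, hpow]; field_simp; try ring] at h0
      have hmono : ENNReal.ofReal p₀ ≤ ENNReal.ofReal (1 - p₀) :=
        ENNReal.ofReal_le_ofReal (by linarith)
      calc ENNReal.ofReal p₀ ^ (k + 1) = ENNReal.ofReal p₀ * ENNReal.ofReal p₀ ^ k := by
            rw [pow_succ, mul_comm]
      _ ≤ ENNReal.ofReal (1 - p₀) * ENNReal.ofReal p₀ ^ k := mul_le_mul_left hmono _
      _ ≤ ENNReal.ofReal (1 - p₀) * μ (Set.Icc ((j' : ℝ) / 2 ^ k) (((j' : ℝ) + 1) / 2 ^ k)) :=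
            mul_le_mul_right (ih j' hjlt) _
      _ ≤ _ := by rw [h0]; exact le_add_self

lemma mem_msupport_aux (hp₀ : 0 < p₀) (hp₀' : p₀ < 1 / 2) [IsProbabilityMeasure μ]
    (heq : EqHyp p₀ μ) {x : ℝ} (hx0 : 0 < x) (hx1 : x < 1) : x ∈ msupport μ := by
  simp only [msupport, Set.mem_setOf_eq]
  intro ρ hρ
  obtain ⟨k, hk⟩ := exists_pow_lt_of_lt_one hρ (by norm_num : (1 / 2 : ℝ) < 1)
  set j := ⌊x * 2 ^ k⌋₊ with hjdef
  have h2k : (0 : ℝ) < 2 ^ k := by positivity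
  have hx2 : 0 ≤ x * 2 ^ k := by positivity
  have hj1 : (j : ℝ) ≤ x * 2 ^ k := Nat.floor_le hx2
  have hj2 : x * 2 ^ k < (j : ℝ) + 1 := Nat.lt_floor_add_one _
  have hjlt : j < 2 ^ k := by
    apply (Nat.floor_lt hx2).mpr
    push_cast
    calc x * 2 ^ k < 1 * 2 ^ k := by nlinarith
    _ = 2 ^ k := one_mul _
  have hhalf : (1 / 2 : ℝ) ^ k = 1 / 2 ^ k := by rw [div_pow, one_pow]
  have hsub : Set.Icc ((j : ℝ) / 2 ^ k) (((j : ℝ) + 1) / 2 ^ k) ⊆ Metric.ball x ρ := by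
    intro z hz
    have hz1 := hz.1
    have hz2 := hz.2
    have hxin1 : (j : ℝ) / 2 ^ k ≤ x := by rw [div_le_iff₀ h2k]; linarith
    have hxin2 : x ≤ ((j : ℝ) + 1) / 2 ^ k := by rw [le_div_iff₀ h2k]; linarith
    have he : ((j : ℝ) + 1) / 2 ^ k = (j : ℝ) / 2 ^ k + (1 / 2 : ℝ) ^ k := by
      rw [hhalf]; ring
    simp only [Metric.mem_ball, Real.dist_eq]
    rw [abs_sub_lt_iff]
    constructor <;> linarith
  calc (0 : ℝ≥0∞) < ENNReal.ofReal p₀ ^ k := by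
        refine pos_iff_ne_zero.mpr (pow_ne_zero k ?_)
        exact (ENNReal.ofReal_pos.mpr hp₀).ne'
  _ ≤ μ (Set.Icc ((j : ℝ) / 2 ^ k) (((j : ℝ) + 1) / 2 ^ k)) := mu_cyl hp₀ hp₀' heq k j hjlt
  _ ≤ μ (Metric.ball x ρ) := measure_mono hsub

end NoDecayAux

set_option maxHeartbeats 2000000 in
/-- Example: for the Bernoulli convolution-type measure with ratio 1/2 and unequal
weights, the uniform ball-intersection decay property fails, even though the IFS
satisfies the open set condition. -/
theorem example_no_decay
    (p₀ : ℝ) (hp₀ : 0 < p₀) (hp₀' : p₀ < 1 / 2)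
    (μ : Measure ℝ) [IsProbabilityMeasure μ]
    (hμ : μ = ENNReal.ofReal p₀ • Measure.map (fun x : ℝ => x / 2) μ +
      ENNReal.ofReal (1 - p₀) • Measure.map (fun x : ℝ => (x + 1) / 2) μ) :
    ¬ ∃ C α : ℝ, 0 < C ∧ 0 < α ∧
      ∀ x ∈ msupport μ, ∀ y r ε : ℝ, 0 < r → r ≤ 1 → 0 < ε →
        μ (Metric.closedBall y (ε * r) ∩ Metric.closedBall x r) ≤
          ENNReal.ofReal (C * ε ^ α) * μ (Metric.closedBall x r) := by
  rintro ⟨C, α, hC, hα, H⟩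
  have hp1 : (0 : ℝ) < 1 - p₀ := by linarith
  have heq : EqHyp p₀ μ := by
    intro S hS
    conv_lhs => rw [hμ]
    rw [Measure.add_apply, Measure.smul_apply, Measure.smul_apply, smul_eq_mul, smul_eq_mul,
      show (Measure.map (fun x : ℝ => x / 2) μ) S = μ ((fun x : ℝ => x / 2) ⁻¹' S) from
        Measure.map_apply (by fun_prop) hS,
      show (Measure.map (fun x : ℝ => (x + 1) / 2) μ) S = μ ((fun x : ℝ => (x + 1) / 2) ⁻¹' S) from
        Measure.map_apply (by fun_prop) hS]
  -- choose m with C * ((1/2)^m)^α < 1/4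
  set q := (1 / 2 : ℝ) ^ α with hqdef
  have hq0 : 0 < q := Real.rpow_pos_of_pos (by norm_num) α
  have hq1 : q < 1 := Real.rpow_lt_one (by norm_num) (by norm_num) hα
  obtain ⟨m, hm⟩ := exists_pow_lt_of_lt_one (show (0 : ℝ) < 1 / (4 * C) by positivity) hq1
  have hqm0 : 0 < q ^ m := pow_pos hq0 m
  have hCq : C * q ^ m < 1 / 4 := by
    rw [lt_div_iff₀ (by positivity : (0 : ℝ) < 4 * C)] at hm
    nlinarith
  -- choose N
  obtain ⟨N, hN⟩ := exists_pow_lt_of_lt_one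
    (show (0 : ℝ) < p₀ * (1 - p₀) ^ m by positivity)
    (show p₀ / (1 - p₀) < 1 by rw [div_lt_one hp1]; linarith)
  set K := N + m + 1 with hKdef
  have hRX : (1 - p₀) * p₀ ^ N ≤ p₀ * (1 - p₀) ^ K := by
    have h2 := mul_le_mul_of_nonneg_right hN.le (le_of_lt (pow_pos hp1 (N + 1)))
    have e1 : (p₀ / (1 - p₀)) ^ N * (1 - p₀) ^ (N + 1) = (1 - p₀) * p₀ ^ N := by
      rw [div_pow, pow_succ]
      field_simp
    have e2 : p₀ * (1 - p₀) ^ m * (1 - p₀) ^ (N + 1) = p₀ * (1 - p₀) ^ K := by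
      rw [mul_assoc, ← pow_add, show m + (N + 1) = K by omega]
    rw [e1, e2] at h2
    exact h2
  set r := (1 / 2 : ℝ) ^ (N + 2) with hrdef
  set ε := (1 / 2 : ℝ) ^ m with hεdef
  have hr0 : 0 < r := by positivity
  have hr1 : r ≤ 1 := pow_le_one₀ (by norm_num) (by norm_num)
  have hε0 : 0 < ε := by positivity
  have hε1 : ε ≤ 1 := pow_le_one₀ (by norm_num) (by norm_num)
  have her : ε * r = (1 / 2 : ℝ) ^ (K + 1) := by
    rw [hεdef, hrdef, ← pow_add, show m + (N + 2) = K + 1 by omega]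
  have h2r : 2 * r = (1 / 2 : ℝ) ^ (N + 1) := by rw [hrdef, pow_succ]; ring
  have hεrr : ε * r ≤ r := by nlinarith
  have hrq : r ≤ 1 / 4 := by
    calc r ≤ (1 / 2 : ℝ) ^ 2 := pow_le_pow_of_le_one (by norm_num) (by norm_num) (by omega)
    _ = 1 / 4 := by norm_num
  set x := 1 / 2 + r - ε * r with hxdef
  have hεr0 : 0 < ε * r := by positivity
  have hxmem : x ∈ msupport μ :=
    mem_msupport_aux hp₀ hp₀' heq (by rw [hxdef]; linarith) (by rw [hxdef]; linarith)
  have hkey := H x hxmem (1 / 2) r ε hr0 hr1 hε0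
  have hball : Metric.closedBall x r = Set.Icc (x - r) (x + r) := Real.closedBall_eq_Icc
  have hL := mu_L hp₀ hp₀' heq K
  have hR := mu_R hp₀ hp₀' heq N
  have hlower : ENNReal.ofReal p₀ * ENNReal.ofReal (1 - p₀) ^ K ≤
      μ (Metric.closedBall (1 / 2) (ε * r) ∩ Metric.closedBall x r) := by
    rw [← hL]
    apply measure_mono
    intro z hz
    rw [Set.mem_Icc] at hz
    have hz1 := hz.1
    have hz2 := hz.2
    constructor
    · simp only [Metric.mem_closedBall, Real.dist_eq]
      rw [abs_le]
      constructor <;> linarith [her]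
    · simp only [Metric.mem_closedBall, Real.dist_eq]
      rw [abs_le]
      constructor <;> [skip; skip] <;> rw [hxdef] <;> [linarith [her]; linarith [her, hεrr, hr0]]
  have hupper : μ (Metric.closedBall x r) ≤
      ENNReal.ofReal p₀ * ENNReal.ofReal (1 - p₀) ^ K +
        ENNReal.ofReal (1 - p₀) * ENNReal.ofReal p₀ ^ N := by
    calc μ (Metric.closedBall x r) ≤
        μ (Set.Icc (1 / 2 - (1 / 2 : ℝ) ^ (K + 1)) (1 / 2) ∪
          Set.Icc (1 / 2 : ℝ) (1 / 2 + (1 / 2 : ℝ) ^ (N + 1))) := by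
          apply measure_mono
          intro z hz
          rw [Metric.mem_closedBall, Real.dist_eq, abs_le] at hz
          have hz1 := hz.1
          have hz2 := hz.2
          rcases le_total z (1 / 2) with h | h
          · left
            rw [Set.mem_Icc]
            constructor <;> [rw [← her]; skip] <;> rw [hxdef] at hz1 <;> linarith
          · right
            rw [Set.mem_Icc]
            refine ⟨h, ?_⟩
            rw [hxdef] at hz2
            linarith [her, h2r, hεr0]
    _ ≤ μ (Set.Icc (1 / 2 - (1 / 2 : ℝ) ^ (K + 1)) (1 / 2)) +
          μ (Set.Icc (1 / 2 : ℝ) (1 / 2 + (1 / 2 : ℝ) ^ (N + 1))) := measure_union_le _ _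
    _ = _ := by rw [hL, hR]
  have hfin : ENNReal.ofReal p₀ * ENNReal.ofReal (1 - p₀) ^ K ≤
      ENNReal.ofReal (C * ε ^ α) *
        (ENNReal.ofReal p₀ * ENNReal.ofReal (1 - p₀) ^ K +
          ENNReal.ofReal (1 - p₀) * ENNReal.ofReal p₀ ^ N) :=
    hlower.trans (hkey.trans (mul_le_mul_right hupper _))
  have hεα : ε ^ α = q ^ m := by
    rw [hεdef, hqdef, ← Real.rpow_natCast (1 / 2 : ℝ) m,
      ← Real.rpow_natCast ((1 / 2 : ℝ) ^ α) m, ← Real.rpow_mul (by norm_num),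
      ← Real.rpow_mul (by norm_num), mul_comm]
  have hεαnn : (0 : ℝ) ≤ C * ε ^ α := by
    rw [hεα]; positivity
  rw [← ENNReal.ofReal_pow hp1.le, ← ENNReal.ofReal_pow hp₀.le,
    ← ENNReal.ofReal_mul hp₀.le, ← ENNReal.ofReal_mul hp1.le,
    ← ENNReal.ofReal_add (by positivity) (by positivity),
    ← ENNReal.ofReal_mul hεαnn] at hfin
  have hs1 : (0 : ℝ) ≤ p₀ * (1 - p₀) ^ K := mul_nonneg hp₀.le (pow_nonneg hp1.le K)
  have hs2 : (0 : ℝ) ≤ (1 - p₀) * p₀ ^ N := mul_nonneg hp1.le (pow_nonneg hp₀.le N)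
  have hreal := (ENNReal.ofReal_le_ofReal_iff
    (mul_nonneg hεαnn (by linarith))).mp hfin
  rw [hεα] at hreal
  have hXpos : (0 : ℝ) < p₀ * (1 - p₀) ^ K := by positivity
  have hc0 : (0 : ℝ) ≤ C * q ^ m := by positivity
  have h1 : p₀ * (1 - p₀) ^ K + (1 - p₀) * p₀ ^ N ≤ 2 * (p₀ * (1 - p₀) ^ K) := by linarith
  have h2 := mul_le_mul_of_nonneg_left h1 hc0
  have h3 : C * q ^ m * (2 * (p₀ * (1 - p₀) ^ K)) < 1 / 4 * (2 * (p₀ * (1 - p₀) ^ K)) :=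
    mul_lt_mul_of_pos_right hCq (by positivity)
  linarith
end
end
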